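/- arXiv:1508.03537 — 9 statements merged into one kernel-verified Lean document; each statement's English description precedes it below -/
import Mathlib

section
/- A linear subspace V of Lorentzian space L^{1,d} is disjoint from the light cone L = {x : ⟨x,x⟩ ≤ 0, x₀ ≥ 0} except at the origin if and only if its Lorentzian-orthogonal complement V^⊥ = {x : ⟨x,y⟩ = 0 for all y ∈ V} contains a point in the interior of L (i.e. a point with ⟨x,x⟩ < 0 and x₀ > 0). -/
open scoped BigOperators

/-- The Lorentzian scalar product on `ℝ^{d+1}`: `⟨x,y⟩ = -x₀y₀ + Σ_{i≥1} x_i y_i`. -/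
def lorentz {d : ℕ} (x y : Fin (d + 1) → ℝ) : ℝ :=
  (∑ i, x i * y i) - 2 * (x 0 * y 0)

lemma lorentz_eq {d : ℕ} (x y : Fin (d + 1) → ℝ) :
    lorentz x y = (∑ i : Fin d, x i.succ * y i.succ) - x 0 * y 0 := by
  simp only [lorentz, Fin.sum_univ_succ]
  ring

theorem stmt1 (d : ℕ) (V : Submodule ℝ (Fin (d + 1) → ℝ)) :
    -- V meets the light cone L = {x | ⟨x,x⟩ ≤ 0, x₀ ≥ 0} only at the origin
    ((V : Set (Fin (d + 1) → ℝ)) ∩ {x | lorentz x x ≤ 0 ∧ 0 ≤ x 0} = {0}) ↔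
      -- iff the Lorentzian-orthogonal complement V^⊥ contains an interior point of L
      ∃ x : Fin (d + 1) → ℝ, (∀ y ∈ V, lorentz x y = 0) ∧ lorentz x x < 0 ∧ 0 < x 0 := by
  constructor
  · -- hard direction: separation
    intro h
    -- the compact convex base of the light cone
    set C : Set (Fin (d + 1) → ℝ) :=
      {y | y 0 = 1 ∧ (∑ i : Fin d, (y i.succ) ^ 2) ≤ 1} with hC
    have hCconv : Convex ℝ C := by
      intro a ha b hb p q hp hq hpq
      obtain ⟨ha0, ha1⟩ := ha
      obtain ⟨hb0, hb1⟩ := hb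
      constructor
      · simp only [Pi.add_apply, Pi.smul_apply, smul_eq_mul, ha0, hb0]
        linarith
      · have key : ∀ i : Fin d,
            ((p • a + q • b) i.succ) ^ 2 ≤ p * (a i.succ) ^ 2 + q * (b i.succ) ^ 2 := by
          intro i
          simp only [Pi.add_apply, Pi.smul_apply, smul_eq_mul]
          nlinarith [mul_nonneg (mul_nonneg hp hq) (sq_nonneg (a i.succ - b i.succ))]
        calc (∑ i : Fin d, ((p • a + q • b) i.succ) ^ 2)
            ≤ ∑ i : Fin d, (p * (a i.succ) ^ 2 + q * (b i.succ) ^ 2) :=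
              Finset.sum_le_sum fun i _ => key i
          _ = p * (∑ i : Fin d, (a i.succ) ^ 2) + q * (∑ i : Fin d, (b i.succ) ^ 2) := by
              rw [Finset.sum_add_distrib, Finset.mul_sum, Finset.mul_sum]
          _ ≤ p * 1 + q * 1 := by
              gcongr
          _ = 1 := by linarith
    have hCcomp : IsCompact C := by
      apply Metric.isCompact_of_isClosed_isBounded
      · have h1 : IsClosed {y : Fin (d + 1) → ℝ | y 0 = 1} :=
          isClosed_eq (continuous_apply 0) continuous_const
        have h2 : IsClosed {y : Fin (d + 1) → ℝ | (∑ i : Fin d, (y i.succ) ^ 2) ≤ 1} := by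
          apply isClosed_le _ continuous_const
          exact continuous_finset_sum _ fun i _ => (continuous_apply i.succ).pow 2
        exact h1.inter h2
      · refine (Metric.isBounded_closedBall (x := (0 : Fin (d + 1) → ℝ)) (r := 1)).subset ?_
        intro y hy
        obtain ⟨hy0, hy1⟩ := hy
        rw [Metric.mem_closedBall, dist_zero_right]
        rw [pi_norm_le_iff_of_nonneg zero_le_one]
        intro i
        refine Fin.cases ?_ ?_ i
        · simp [hy0]
        · intro j
          rw [Real.norm_eq_abs, ← sq_le_one_iff_abs_le_one]
          refine le_trans ?_ hy1
          exact Finset.single_le_sum (f := fun k : Fin d => (y k.succ) ^ 2)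
            (fun k _ => sq_nonneg _) (Finset.mem_univ j)
    have hdisj : Disjoint C (V : Set (Fin (d + 1) → ℝ)) := by
      rw [Set.disjoint_left]
      intro y hyC hyV
      have hmem : y ∈ (V : Set (Fin (d + 1) → ℝ)) ∩ {x | lorentz x x ≤ 0 ∧ 0 ≤ x 0} := by
        refine ⟨hyV, ?_, ?_⟩
        · rw [lorentz_eq, hyC.1]
          have h2 := hyC.2
          have heq : (∑ i : Fin d, y i.succ * y i.succ) = ∑ i : Fin d, (y i.succ) ^ 2 := by
            apply Finset.sum_congr rfl; intro i _; ring
          rw [heq]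
          linarith
        · rw [hyC.1]; exact zero_le_one
      rw [h] at hmem
      have h0 : y 0 = (0 : ℝ) := by rw [hmem]; rfl
      rw [hyC.1] at h0
      exact one_ne_zero h0
    obtain ⟨f, u, v, hfC, huv, hfV⟩ :=
      geometric_hahn_banach_compact_closed hCconv hCcomp V.convex
        V.closed_of_finiteDimensional hdisj
    -- f vanishes on V
    have hf0 : ∀ y ∈ V, f y = 0 := by
      intro y hy
      by_contra hne
      have h1 : v < f (((v - 1) / f y) • y) := hfV _ (V.smul_mem _ hy)
      rw [map_smul, smul_eq_mul, div_mul_cancel₀ _ hne] at h1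
      linarith
    have hv0 : v < 0 := by
      have := hfV 0 V.zero_mem
      rwa [map_zero] at this
    have hu0 : u < 0 := lt_trans huv hv0
    -- the representing vector
    set x : Fin (d + 1) → ℝ :=
      fun i => if i = 0 then -(f (Pi.single 0 1)) else f (Pi.single i 1) with hxdef
    have hrep : ∀ y : Fin (d + 1) → ℝ, lorentz x y = f y := by
      intro y
      have hy : f y = ∑ i : Fin (d + 1), y i * f (Pi.single i 1) := by
        conv_lhs => rw [← Finset.univ_sum_single y]
        rw [map_sum]
        apply Finset.sum_congr rfl
        intro i _
        have hsingle : Pi.single i (y i) = (y i) • (Pi.single i 1 : Fin (d + 1) → ℝ) := by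
          funext j
          by_cases hj : j = i
          · subst hj; simp
          · simp [Pi.single_eq_of_ne hj]
        rw [hsingle, map_smul, smul_eq_mul]
      rw [hy, Fin.sum_univ_succ, lorentz_eq]
      have hx0 : x 0 = -(f (Pi.single (0 : Fin (d + 1)) (1 : ℝ))) := by simp [hxdef]
      have hxs : ∀ i : Fin d, x i.succ = f (Pi.single i.succ (1 : ℝ)) := by
        intro i
        simp [hxdef, Fin.succ_ne_zero i]
      rw [hx0]
      have hsum : (∑ i : Fin d, x i.succ * y i.succ)
          = ∑ i : Fin d, y i.succ * f (Pi.single i.succ (1 : ℝ)) := by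
        apply Finset.sum_congr rfl
        intro i _
        rw [hxs i]; ring
      rw [hsum]
      ring
    have hmem0 : (Pi.single 0 1 : Fin (d + 1) → ℝ) ∈ C := by
      constructor
      · simp
      · have hz : ∀ i : Fin d, (Pi.single 0 1 : Fin (d + 1) → ℝ) i.succ = 0 := by
          intro i
          exact Pi.single_eq_of_ne (Fin.succ_ne_zero i) 1
        simp only [hz]
        simp
    have hx0pos : 0 < x 0 := by
      have h1 := lt_trans (hfC _ hmem0) hu0
      have hx0 : x 0 = -(f (Pi.single (0 : Fin (d + 1)) (1 : ℝ))) := by simp [hxdef]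
      rw [hx0]; linarith
    refine ⟨x, ?_, ?_, hx0pos⟩
    · intro y hy
      rw [hrep y, hf0 y hy]
    · -- lorentz x x < 0
      rw [lorentz_eq]
      set S : ℝ := ∑ i : Fin d, x i.succ * x i.succ with hS
      have hSsq : S = ∑ i : Fin d, (x i.succ) ^ 2 := by
        rw [hS]; apply Finset.sum_congr rfl; intro i _; ring
      have hSnn : 0 ≤ S := by
        rw [hSsq]; exact Finset.sum_nonneg fun i _ => sq_nonneg _
      rcases eq_or_lt_of_le hSnn with hS0 | hSpos
      · rw [← hS0]
        nlinarith
      · set r : ℝ := Real.sqrt S with hr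
        have hrpos : 0 < r := Real.sqrt_pos.2 hSpos
        have hr2 : r * r = S := Real.mul_self_sqrt hSnn
        set y : Fin (d + 1) → ℝ := fun i => if i = 0 then 1 else x i / r with hydef
        have hy0 : y 0 = 1 := by simp [hydef]
        have hys : ∀ i : Fin d, y i.succ = x i.succ / r := by
          intro i; simp [hydef, Fin.succ_ne_zero i]
        have hyC : y ∈ C := by
          constructor
          · exact hy0
          · have hterm : ∀ i : Fin d, (y i.succ) ^ 2 = (x i.succ) ^ 2 / (r * r) := by
              intro i
              rw [hys i, div_pow, pow_two r]
            rw [Finset.sum_congr rfl fun i _ => hterm i, ← Finset.sum_div, ← hSsq, hr2,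
              div_self (ne_of_gt hSpos)]
        have hlt : f y < 0 := lt_trans (hfC _ hyC) hu0
        rw [← hrep, lorentz_eq] at hlt
        have hterm2 : ∀ i : Fin d, x i.succ * y i.succ = x i.succ * x i.succ / r := by
          intro i; rw [hys i, mul_div_assoc]
        have hsum2 : (∑ i : Fin d, x i.succ * y i.succ) = S / r := by
          rw [Finset.sum_congr rfl fun i _ => hterm2 i, ← Finset.sum_div, ← hS]
        rw [hsum2, hy0, mul_one] at hlt
        have hSr : S / r = r := by
          rw [← hr2, mul_div_assoc, div_self (ne_of_gt hrpos), mul_one]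
        rw [hSr] at hlt
        -- r < x 0, hence S = r * r < x 0 * x 0
        nlinarith
  · -- easy direction
    rintro ⟨x, hxV, hxx, hx0⟩
    apply Set.eq_singleton_iff_unique_mem.2
    constructor
    · exact ⟨V.zero_mem, by simp [lorentz], le_refl 0⟩
    · rintro y ⟨hyV, hyy, hy0⟩
      have hxy : lorentz x y = 0 := hxV y hyV
      rw [lorentz_eq] at hxy hyy
      have hxx' := hxx
      rw [lorentz_eq] at hxx'
      set A : ℝ := ∑ i : Fin d, x i.succ * y i.succ with hA
      set X : ℝ := ∑ i : Fin d, x i.succ * x i.succ with hX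
      set Y : ℝ := ∑ i : Fin d, y i.succ * y i.succ with hY
      have hCS : A ^ 2 ≤ X * Y := by
        have hcs := Finset.sum_mul_sq_le_sq_mul_sq Finset.univ
          (fun i : Fin d => x i.succ) (fun i : Fin d => y i.succ)
        have hX' : X = ∑ i : Fin d, (x i.succ) ^ 2 := by
          rw [hX]; apply Finset.sum_congr rfl; intro i _; ring
        have hY' : Y = ∑ i : Fin d, (y i.succ) ^ 2 := by
          rw [hY]; apply Finset.sum_congr rfl; intro i _; ring
        rw [hX', hY', hA]
        exact hcs
      have hYnn : 0 ≤ Y := Finset.sum_nonneg fun i _ => mul_self_nonneg _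
      have hXnn : 0 ≤ X := Finset.sum_nonneg fun i _ => mul_self_nonneg _
      have hY0 : Y = 0 := by
        by_contra hne
        have hYpos : 0 < Y := lt_of_le_of_ne hYnn (Ne.symm hne)
        have hA2 : A ^ 2 = (x 0) ^ 2 * (y 0) ^ 2 := by
          have : A = x 0 * y 0 := by linarith
          rw [this]; ring
        have h1 : X * Y < (x 0) ^ 2 * Y := by
          apply mul_lt_mul_of_pos_right _ hYpos
          nlinarith
        have h2 : (x 0) ^ 2 * Y ≤ (x 0) ^ 2 * (y 0) ^ 2 := by
          apply mul_le_mul_of_nonneg_left _ (sq_nonneg _)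
          nlinarith
        linarith
      have hally : ∀ i : Fin d, y i.succ = 0 := by
        intro i
        have h1 : y i.succ * y i.succ ≤ Y := by
          rw [hY]
          exact Finset.single_le_sum (f := fun k : Fin d => y k.succ * y k.succ)
            (fun k _ => mul_self_nonneg _) (Finset.mem_univ i)
        have h2 : y i.succ * y i.succ = 0 :=
          le_antisymm (by linarith) (mul_self_nonneg _)
        exact mul_self_eq_zero.1 h2
      have hA0 : A = 0 := by
        rw [hA]
        apply Finset.sum_eq_zero
        intro i _
        rw [hally i, mul_zero]
      have hy00 : y 0 = 0 := by
        have hxy0 : x 0 * y 0 = 0 := by linarith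
        rcases mul_eq_zero.1 hxy0 with hcase | hcase
        · exact absurd hcase (ne_of_gt hx0)
        · exact hcase
      funext i
      refine Fin.cases ?_ ?_ i
      · exact hy00
      · exact hally
end

section
/- Let I ⊆ {1,...,n} be a set of size d. Then I indexes a facet of the cyclic d-polytope C(d,n) realized as the convex hull of points γ(t₁),...,γ(t_n) on the moment curve γ(t)=(t,t²,...,t^d) with t₁<...<t_n, if and only if for any two indices j < k in {1,...,n}\I, the set {i ∈ I : j < i < k} has even cardinality (Gale's evenness condition). -/
/-!
Via the moment curve γ(s) = (s, s², …, s^d), an affine functional `x ↦ c - ℓ x` on `ℝ^d` is the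
same thing as a polynomial `Q` of degree at most `d`, with `c - ℓ (γ s) = Q(s)`. Hence `I` spans
a facet exactly when some such `Q` vanishes at the `t i`, `i ∈ I`, and is positive at all other
`t m`: positivity off `I` is strictness of the supporting hyperplane, which must hold because `d + 1`
points of the moment curve are affinely independent. Having `d` prescribed roots, `Q` is a multiple
of `∏ i ∈ I, (X - t i)`, whose sign at `t m` is the parity of the number of `i ∈ I` with `m < i`;
all these signs agree exactly under Gale's evenness condition.
-/

open Finset Polynomial Lagrange

lemma prod_pos_iff_even_card_filter_neg {ι : Type*} {s : Finset ι} {f : ι → ℝ}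
    (hf : ∀ i ∈ s, f i ≠ 0) : 0 < ∏ i ∈ s, f i ↔ Even #{i ∈ s | f i < 0} := by
  classical
  induction s using Finset.induction_on with
  | empty => simp
  | insert a s ha ih =>
    have hs : ∀ i ∈ s, f i ≠ 0 := fun i hi => hf i (mem_insert_of_mem hi)
    have hprod : ∏ i ∈ s, f i ≠ 0 := prod_ne_zero_iff.mpr hs
    rw [prod_insert ha, filter_insert]
    rcases (hf a (mem_insert_self a s)).lt_or_gt with hneg | hpos
    · rw [if_pos hneg, card_insert_of_notMem fun h => ha (mem_filter.mp h).1, Nat.even_add_one,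
        ← ih hs, mul_pos_iff, not_lt]
      constructor
      · rintro (⟨h, -⟩ | ⟨-, h⟩)
        exacts [absurd h hneg.not_gt, h.le]
      · exact fun h => Or.inr ⟨hneg, h.lt_of_ne hprod⟩
    · rw [if_neg hpos.not_gt, mul_pos_iff_of_pos_left hpos, ih hs]

lemma prod_sub_mul_prod_sub_pos_iff {ι : Type*} [LinearOrder ι] {t : ι → ℝ} (ht : StrictMono t)
    {I : Finset ι} {j k : ι} (hj : j ∉ I) (hk : k ∉ I) (hjk : j ≤ k) :
    0 < (∏ i ∈ I, (t j - t i)) * ∏ i ∈ I, (t k - t i) ↔ Even #{i ∈ I | j < i ∧ i < k} := by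
  rw [← prod_mul_distrib, prod_pos_iff_even_card_filter_neg fun i hi =>
    mul_ne_zero (sub_ne_zero.mpr (ht.injective.ne (ne_of_mem_of_not_mem hi hj).symm))
      (sub_ne_zero.mpr (ht.injective.ne (ne_of_mem_of_not_mem hi hk).symm))]
  congr! 3 with i
  simp only [mul_neg_iff, sub_pos, sub_neg, ht.lt_iff_lt]
  exact ⟨fun h => h.resolve_left fun h' => (h'.1.trans_le hjk).not_gt h'.2, Or.inr⟩

lemma exists_eq_C_mul_nodal {ι : Type*} {t : ι → ℝ} (ht : Function.Injective t) {I : Finset ι}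
    {Q : ℝ[X]} (hQ : Q.natDegree ≤ #I) (hroots : ∀ i ∈ I, Q.eval (t i) = 0) :
    ∃ a, Q = C a * nodal I t := by
  classical
  refine ⟨Q.coeff #I, eq_of_degree_sub_lt_of_eval_finset_eq (I.image t) ?_ ?_⟩
  · rw [card_image_of_injective I ht, degree_lt_iff_coeff_zero]
    intro m hm
    rw [coeff_sub, coeff_C_mul]
    rcases hm.eq_or_lt with rfl | hm
    · rw [← natDegree_nodal (s := I) (v := t), nodal_monic.coeff_natDegree, mul_one, sub_self]
    · have hnodal : (nodal I t).coeff m = 0 :=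
        coeff_eq_zero_of_natDegree_lt (by rwa [natDegree_nodal])
      rw [coeff_eq_zero_of_natDegree_lt (hQ.trans_lt hm), hnodal, mul_zero, sub_zero]
  · intro x hx
    obtain ⟨i, hi, rfl⟩ := mem_image.mp hx
    rw [hroots i hi, eval_mul, eval_nodal_at_node hi, mul_zero]

noncomputable def momentCurve (d : ℕ) (s : ℝ) : Fin d → ℝ := fun k => s ^ (k.1 + 1)

noncomputable def momentDual (d : ℕ) (Q : ℝ[X]) : StrongDual ℝ (Fin d → ℝ) :=
  ∑ k : Fin d, Q.coeff (k.1 + 1) • ContinuousLinearMap.proj k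

lemma eval_eq_coeff_zero_add_momentDual {d : ℕ} {Q : ℝ[X]} (hQ : Q.natDegree ≤ d) (s : ℝ) :
    Q.eval s = Q.coeff 0 + momentDual d Q (momentCurve d s) := by
  rw [eval_eq_sum_range' (Nat.lt_succ_of_le hQ), sum_range_succ',
    ← Fin.sum_univ_eq_sum_range (fun k => Q.coeff (k + 1) * s ^ (k + 1))]
  simp [momentDual, momentCurve, add_comm]

lemma exists_natDegree_le_eval_eq_sub {d : ℕ} (ℓ : (Fin d → ℝ) →ₗ[ℝ] ℝ) (c : ℝ) :
    ∃ Q : ℝ[X], Q.natDegree ≤ d ∧ ∀ s, Q.eval s = c - ℓ (momentCurve d s) := by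
  classical
  refine ⟨C c - ∑ k : Fin d, C (ℓ fun j => if k = j then 1 else 0) * X ^ (k.1 + 1), ?_, ?_⟩
  · refine (natDegree_sub_le _ _).trans (max_le (by simp) (natDegree_sum_le_of_forall_le _ _ ?_))
    intro k _
    exact natDegree_C_mul_X_pow_le _ _ |>.trans k.2
  · intro s
    rw [eval_sub, eval_C, eval_finsetSum, ℓ.pi_apply_eq_sum_univ]
    refine congrArg (c - ·) (sum_congr rfl fun k _ => ?_)
    rw [eval_mul, eval_C, eval_pow, eval_X, smul_eq_mul, mul_comm]
    rfl

lemma affineIndependent_momentCurve {d : ℕ} {ι : Type*} [Fintype ι] {x : ι → ℝ}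
    (hx : Function.Injective x) (hcard : Fintype.card ι ≤ d + 1) :
    AffineIndependent ℝ fun i => momentCurve d (x i) := by
  classical
  rw [affineIndependent_iff]
  intro s w hw₀ hw₁ e he
  set L := nodal (s.erase e) x
  have hL : L.natDegree ≤ d := by
    have := s.card_le_univ
    rw [natDegree_nodal, card_erase_of_mem he]
    omega
  -- `L` has degree at most `d`, so `L (x i)` is an affine function of `momentCurve d (x i)`.
  have hsum : ∑ i ∈ s, w i * L.eval (x i) = 0 := by
    simp only [eval_eq_coeff_zero_add_momentDual hL, mul_add, sum_add_distrib, ← sum_mul, hw₀,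
      zero_mul, zero_add]
    simpa [map_sum, map_smul] using congrArg (momentDual d L) hw₁
  rw [sum_eq_single_of_mem e he fun i hi hie => by
    rw [eval_nodal_at_node (mem_erase.mpr ⟨hie, hi⟩), mul_zero]] at hsum
  exact (mul_eq_zero.mp hsum).resolve_right
    (eval_nodal_not_at_node fun i hi => hx.ne (ne_of_mem_erase hi).symm)

lemma finrank_vectorSpan_image_momentCurve {d : ℕ} {ι : Type*} {t : ι → ℝ}
    (ht : Function.Injective t) {S : Finset ι} (hS : #S ≤ d + 1) :
    Module.finrank ℝ (vectorSpan ℝ ((fun m => momentCurve d (t m)) '' S)) = #S - 1 := by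
  rcases S.eq_empty_or_nonempty with rfl | hne
  · simp
  rw [Set.image_eq_range]
  exact (affineIndependent_momentCurve (ht.comp Subtype.val_injective) (by simpa using hS))
    |>.finrank_vectorSpan (by simp; have := hne.card_pos; omega)

section Convex

variable {E : Type*} [AddCommGroup E] [Module ℝ E]

lemma convexHull_union_inter_eq_of_lt (ℓ : E →ₗ[ℝ] ℝ) {c : ℝ} {S T : Set E}
    (hS : ∀ x ∈ S, ℓ x = c) (hT : ∀ x ∈ T, ℓ x < c) :
    convexHull ℝ (S ∪ T) ∩ {x | ℓ x = c} = convexHull ℝ S := by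
  have hS' : convexHull ℝ S ⊆ {x | ℓ x = c} := convexHull_min hS (convex_hyperplane ℓ.isLinear c)
  have hT' : convexHull ℝ T ⊆ {x | ℓ x < c} := convexHull_min hT (convex_halfSpace_lt ℓ.isLinear c)
  refine subset_antisymm ?_ (Set.subset_inter (convexHull_mono Set.subset_union_left) hS')
  rintro x ⟨hx, hxc⟩
  rcases S.eq_empty_or_nonempty with rfl | hSne
  · rw [Set.empty_union] at hx
    exact absurd hxc (hT' hx).ne
  rcases T.eq_empty_or_nonempty with rfl | hTne
  · rwa [Set.union_empty] at hx
  rw [convexHull_union hSne hTne] at hx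
  obtain ⟨a, ha, b, hb, μ, ν, -, hν, hμν, rfl⟩ := mem_convexJoin.mp hx
  have hν₀ : ν = 0 := by
    have hb' : ℓ b < c := hT' hb
    have ha' : ℓ a = c := hS' ha
    simp only [Set.mem_ofPred_eq, map_add, map_smul, smul_eq_mul, ha',
      show μ = 1 - ν by linarith] at hxc
    nlinarith
  rw [hν₀, zero_smul, add_zero, show μ = 1 by linarith, one_smul]
  exact ha

lemma isExposed_convexHull_image [TopologicalSpace E] {ι : Type*} (p : ι → E) (s : Set ι)
    (ℓ : StrongDual ℝ E) {c : ℝ} (hs : ∀ i ∈ s, ℓ (p i) = c) (hsc : ∀ i ∉ s, ℓ (p i) < c) :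
    IsExposed ℝ (convexHull ℝ (Set.range p)) (convexHull ℝ (p '' s)) := by
  rintro ⟨x₀, hx₀⟩
  refine ⟨ℓ, ?_⟩
  have hface := convexHull_union_inter_eq_of_lt (ℓ : E →ₗ[ℝ] ℝ) (S := p '' s) (T := p '' sᶜ)
    (by rintro _ ⟨i, hi, rfl⟩; exact hs i hi) (by rintro _ ⟨i, hi, rfl⟩; exact hsc i hi)
  rw [Set.image_union_image_compl_eq_range] at hface
  have hle : ∀ y ∈ convexHull ℝ (Set.range p), ℓ y ≤ c :=
    convexHull_min (Set.range_subset_iff.mpr fun i => by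
      by_cases hi : i ∈ s
      exacts [(hs i hi).le, (hsc i hi).le]) (convex_halfSpace_le ℓ.isLinear c)
  rw [← hface] at hx₀ ⊢
  ext x
  refine ⟨fun ⟨hx, hxc⟩ => ⟨hx, fun y hy => (hle y hy).trans_eq hxc.symm⟩,
    fun ⟨hx, hmax⟩ => ⟨hx, le_antisymm (hle x hx) ?_⟩⟩
  exact hx₀.2.symm.trans_le (hmax x₀ hx₀.1)

end Convex

structure IsSupportingPoly {ι : Type*} (d : ℕ) (t : ι → ℝ) (I : Finset ι) (Q : ℝ[X]) : Prop where
  natDegree_le : Q.natDegree ≤ d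
  eval_eq_zero : ∀ i ∈ I, Q.eval (t i) = 0
  eval_pos : ∀ m ∉ I, 0 < Q.eval (t m)

section SupportingPoly

variable {ι : Type*} {d : ℕ} {t : ι → ℝ} {I : Finset ι}

lemma exists_isSupportingPoly_of_gale [LinearOrder ι] (ht : StrictMono t) (hI : #I ≤ d)
    (hgale : ∀ j k, j ∉ I → k ∉ I → j < k → Even #{i ∈ I | j < i ∧ i < k}) :
    ∃ Q, IsSupportingPoly d t I Q := by
  have hpos : ∀ j k, j ∉ I → k ∉ I → j ≤ k →
      0 < (nodal I t).eval (t j) * (nodal I t).eval (t k) := by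
    intro j k hj hk hjk
    rw [eval_nodal, eval_nodal, prod_sub_mul_prod_sub_pos_iff ht hj hk hjk]
    rcases hjk.lt_or_eq with hjk | rfl
    · exact hgale j k hj hk hjk
    · rw [filter_false_of_mem fun i _ h => lt_asymm h.1 h.2, card_empty]
      exact Even.zero
  by_cases hall : ∀ m, m ∈ I
  · exact ⟨nodal I t, ⟨natDegree_nodal.trans_le hI, fun i hi => eval_nodal_at_node hi,
      fun m hm => absurd (hall m) hm⟩⟩
  simp only [not_forall] at hall
  obtain ⟨m₀, hm₀⟩ := hall
  refine ⟨C ((nodal I t).eval (t m₀)) * nodal I t, ⟨?_, ?_, ?_⟩⟩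
  · exact (natDegree_C_mul_le _ _).trans (natDegree_nodal.trans_le hI)
  · intro i hi
    rw [eval_mul, eval_nodal_at_node hi, mul_zero]
  · intro m hm
    rw [eval_mul, eval_C]
    rcases le_total m₀ m with h | h
    · exact hpos m₀ m hm₀ hm h
    · rw [mul_comm]
      exact hpos m m₀ hm hm₀ h

lemma IsSupportingPoly.gale [LinearOrder ι] {Q : ℝ[X]} (hQ : IsSupportingPoly d t I Q)
    (ht : StrictMono t) (hI : d ≤ #I) :
    ∀ j k, j ∉ I → k ∉ I → j < k → Even #{i ∈ I | j < i ∧ i < k} := by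
  intro j k hj hk hjk
  obtain ⟨a, rfl⟩ := exists_eq_C_mul_nodal ht.injective (hQ.natDegree_le.trans hI) hQ.eval_eq_zero
  have hjk' := mul_pos (hQ.eval_pos j hj) (hQ.eval_pos k hk)
  simp only [eval_mul, eval_C] at hjk'
  rw [← prod_sub_mul_prod_sub_pos_iff ht hj hk hjk.le, ← eval_nodal, ← eval_nodal]
  refine pos_of_mul_pos_right (a := a ^ 2) ?_ (sq_nonneg a)
  linarith

lemma IsSupportingPoly.isExposed {Q : ℝ[X]} (hQ : IsSupportingPoly d t I Q) :
    IsExposed ℝ (convexHull ℝ (Set.range fun m => momentCurve d (t m)))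
      (convexHull ℝ ((fun m => momentCurve d (t m)) '' I)) := by
  refine isExposed_convexHull_image _ _ (-momentDual d Q) (c := Q.coeff 0) (fun i hi => ?_)
    fun m hm => ?_
  · have := eval_eq_coeff_zero_add_momentDual hQ.natDegree_le (t i)
    rw [hQ.eval_eq_zero i hi] at this
    simp only [neg_apply]
    linarith
  · have := eval_eq_coeff_zero_add_momentDual hQ.natDegree_le (t m)
    have := hQ.eval_pos m hm
    simp only [neg_apply]
    linarith

lemma exists_isSupportingPoly_of_isExposed (ht : Function.Injective t) (hI : #I = d)
    (hexp : IsExposed ℝ (convexHull ℝ (Set.range fun m => momentCurve d (t m)))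
      (convexHull ℝ ((fun m => momentCurve d (t m)) '' I)))
    (hdim : Module.finrank ℝ
      (affineSpan ℝ (convexHull ℝ ((fun m => momentCurve d (t m)) '' I))).direction = d - 1) :
    ∃ Q, IsSupportingPoly d t I Q := by
  classical
  rcases I.eq_empty_or_nonempty with rfl | ⟨i₀, hi₀⟩
  · exact ⟨1, ⟨by simp, by simp, by simp⟩⟩
  set p := fun m => momentCurve d (t m)
  set A := convexHull ℝ (Set.range p)
  set B := convexHull ℝ (p '' I)
  have hA : ∀ m, p m ∈ A := fun m => subset_convexHull ℝ _ ⟨m, rfl⟩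
  have hB : ∀ i ∈ I, p i ∈ B := fun i hi => subset_convexHull ℝ _ ⟨i, hi, rfl⟩
  obtain ⟨ℓ, hBℓ⟩ := hexp ⟨p i₀, hB i₀ hi₀⟩
  have hmax : ∀ i ∈ I, ∀ y ∈ A, ℓ y ≤ ℓ (p i) := fun i hi => (hBℓ ▸ hB i hi).2
  set c := ℓ (p i₀)
  have hIc : ∀ i ∈ I, ℓ (p i) = c := fun i hi =>
    le_antisymm (hmax i₀ hi₀ _ (hA i)) (hmax i hi _ (hA i₀))
  obtain ⟨Q, hdeg, hQ⟩ := exists_natDegree_le_eval_eq_sub (ℓ : (Fin d → ℝ) →ₗ[ℝ] ℝ) c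
  refine ⟨Q, ⟨hdeg, fun i hi => by simp [hQ, p, hIc i hi], fun m hm => ?_⟩⟩
  rw [hQ, sub_pos]
  refine (hmax i₀ hi₀ _ (hA m)).lt_of_ne fun hmc => ?_
  -- Otherwise `B` contains the `d + 1` affinely independent points `p '' insert m I`.
  have hsub : p '' ↑(insert m I) ⊆ B := by
    rw [coe_insert, Set.image_insert_eq, Set.insert_subset_iff]
    refine ⟨hBℓ ▸ ⟨hA m, fun y hy => hmc ▸ hmax i₀ hi₀ y hy⟩, subset_convexHull ℝ _⟩
  have hle := Submodule.finrank_mono (vectorSpan_mono ℝ hsub)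
  rw [finrank_vectorSpan_image_momentCurve ht (by rw [card_insert_of_notMem hm, hI]),
    card_insert_of_notMem hm, ← direction_affineSpan, hdim] at hle
  have := card_pos.mpr ⟨i₀, hi₀⟩
  omega

end SupportingPoly

theorem stmt4_general (d n : ℕ)
    (t : Fin n → ℝ) (ht : StrictMono t)
    -- the points on the moment curve γ(s) = (s, s², ..., s^d)
    (p : Fin n → (Fin d → ℝ)) (hp : ∀ k i, p k i = t k ^ (i.1 + 1))
    (I : Finset (Fin n)) (hI : I.card = d) :
    -- I indexes a facet of the cyclic polytope C(d,n) = conv{p 1, ..., p n}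
    (IsExposed ℝ (convexHull ℝ (Set.range p)) (convexHull ℝ (p '' ↑I)) ∧
        Module.finrank ℝ (affineSpan ℝ (convexHull ℝ (p '' ↑I))).direction = d - 1) ↔
      -- iff I satisfies Gale's evenness condition
      ∀ j k : Fin n, j ∉ I → k ∉ I → j < k →
        Even ((I.filter fun i => j < i ∧ i < k).card) := by
  obtain rfl : p = fun m => momentCurve d (t m) := funext fun m => funext (hp m)
  constructor
  · rintro ⟨hexp, hdim⟩
    obtain ⟨Q, hQ⟩ := exists_isSupportingPoly_of_isExposed ht.injective hI hexp hdim
    exact hQ.gale ht hI.ge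
  · intro hgale
    obtain ⟨Q, hQ⟩ := exists_isSupportingPoly_of_gale ht hI.le hgale
    refine ⟨hQ.isExposed, ?_⟩
    rw [affineSpan_convexHull, direction_affineSpan,
      finrank_vectorSpan_image_momentCurve ht.injective (by omega), hI]

theorem stmt4 (d n : ℕ) (hd : 1 ≤ d) (hn : d + 1 ≤ n)
    (t : Fin n → ℝ) (ht : StrictMono t)
    -- the points on the moment curve γ(s) = (s, s², ..., s^d)
    (p : Fin n → (Fin d → ℝ)) (hp : ∀ k i, p k i = t k ^ (i.1 + 1))
    (I : Finset (Fin n)) (hI : I.card = d) :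
    -- I indexes a facet of the cyclic polytope C(d,n) = conv{p 1, ..., p n}
    (IsExposed ℝ (convexHull ℝ (Set.range p)) (convexHull ℝ (p '' ↑I)) ∧
        Module.finrank ℝ (affineSpan ℝ (convexHull ℝ (p '' ↑I))).direction = d - 1) ↔
      -- iff I satisfies Gale's evenness condition
      ∀ j k : Fin n, j ∉ I → k ∉ I → j < k →
        Even ((I.filter fun i => j < i ∧ i < k).card) :=
  stmt4_general d n t ht p hp I hI
end

section
/- Let V be a finite set of points in Euclidean d-space and I ⊆ V a subset such that some hyperplane strictly separates I from V\I (a k-set, k = |I|). Then I is not a missing face of the polytope conv(V): it is not the case that I fails to be the vertex set of a face of conv(V) while every proper subset of I is the vertex set of a face. Equivalently, if every proper subset of a k-set I spans a face of conv(V), then I itself spans a face. -/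
open scoped RealInnerProductSpace

/-!
Write a point `x` of `conv I` that lies in an open segment of `conv V` as a convex combination
of `V` through the ends of the segment. If the ends carry no weight outside `I`, they lie in
`conv I`. Otherwise the barycentre `z` of the part outside `I` lies in `conv (V \ I)`, hence
outside `conv I` by the separating hyperplane, and yet `z` is an affine combination of `I`.
Walking from `z` towards `x`, the first point of `conv I` has a zero barycentric weight, so it lies
in some `conv (I \ {v})`. That set is a face of `conv V` meeting the segment `[z, x]` in a point
other than `z`, so it contains `x`, and then also the ends of the original segment.
-/

open Finset

section

variable {𝕜 E : Type*} [Field 𝕜] [AddCommGroup E] [Module 𝕜 E]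

lemma exists_sum_eq_centerMass_sdiff [DecidableEq E] {V I : Finset E} (hIV : I ⊆ V) {w μ : E → 𝕜}
    (hw1 : ∑ v ∈ V, w v = 1) (hs : ∑ v ∈ V \ I, w v ≠ 0) (hμ1 : ∑ v ∈ I, μ v = 1)
    (hμw : ∑ v ∈ I, μ v • v = ∑ v ∈ V, w v • v) :
    ∃ ν : E → 𝕜, ∑ v ∈ I, ν v = 1 ∧ ∑ v ∈ I, ν v • v = (V \ I).centerMass w id := by
  have hsplit : ∑ v ∈ V \ I, w v + ∑ v ∈ I, w v = 1 := (sum_sdiff hIV).trans hw1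
  refine ⟨fun v => (∑ v ∈ V \ I, w v)⁻¹ * (μ v - w v), ?_, ?_⟩
  · rw [← mul_sum, sum_sub_distrib, hμ1, ← eq_sub_of_add_eq hsplit, inv_mul_cancel₀ hs]
  · simp only [centerMass, id, mul_smul, sub_smul, ← smul_sum, sum_sub_distrib, hμw,
      ← sum_sdiff hIV, add_sub_cancel_right]

variable [LinearOrder 𝕜] [IsStrictOrderedRing 𝕜]

/- Ratio test: `τ` is the largest of the ratios `ν i / (ν i - μ i)` over the negative
coordinates of `ν`. -/
lemma exists_mix_nonneg_eq_zero {ι : Type*} {s : Finset ι} {μ ν : ι → 𝕜}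
    (hμ : ∀ i ∈ s, 0 ≤ μ i) (hν : ∃ i ∈ s, ν i < 0) :
    ∃ τ ∈ Set.Ioc (0 : 𝕜) 1, ∃ i ∈ s,
      (∀ j ∈ s, 0 ≤ (1 - τ) * ν j + τ * μ j) ∧ (1 - τ) * ν i + τ * μ i = 0 := by
  classical
  set r : ι → 𝕜 := fun j => ν j / (ν j - μ j)
  have hN : (s.filter (ν · < 0)).Nonempty := by simpa [Finset.Nonempty] using hν
  obtain ⟨i, hi, hmax⟩ := (s.filter (ν · < 0)).exists_max_image r hN
  rw [mem_filter] at hi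
  have hden : ∀ j ∈ s, ν j < 0 → ν j - μ j < 0 := fun j hj hνj => by linarith [hμ j hj]
  have hr : ∀ j ∈ s, ν j < 0 → r j * (μ j - ν j) = -ν j := fun j hj hνj => by
    simp only [r]; field_simp [(hden j hj hνj).ne]; ring
  have hτ0 : 0 < r i := div_pos_of_neg_of_neg hi.2 (hden i hi.1 hi.2)
  have hτ1 : r i ≤ 1 := (div_le_one_of_neg (hden i hi.1 hi.2)).2 (by linarith [hμ i hi.1])
  refine ⟨r i, ⟨hτ0, hτ1⟩, i, hi.1, fun j hj => ?_, by linear_combination hr i hi.1 hi.2⟩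
  rcases lt_or_ge (ν j) 0 with hνj | hνj
  · have hle : r j * (μ j - ν j) ≤ r i * (μ j - ν j) :=
      mul_le_mul_of_nonneg_right (hmax j (mem_filter.2 ⟨hj, hνj⟩)) (by linarith [hμ j hj])
    linarith [hr j hj hνj]
  · exact add_nonneg (mul_nonneg (by linarith) hνj) (mul_nonneg hτ0.le (hμ j hj))

lemma exists_lineMap_mem_convexHull_erase [DecidableEq E] {I : Finset E} {x : E} {ν : E → 𝕜}
    (hx : x ∈ convexHull 𝕜 (I : Set E)) (hν : ∑ v ∈ I, ν v = 1)
    (hz : ∑ v ∈ I, ν v • v ∉ convexHull 𝕜 (I : Set E)) :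
    ∃ v ∈ I, ∃ τ ∈ Set.Ioc (0 : 𝕜) 1,
      AffineMap.lineMap (∑ v ∈ I, ν v • v) x τ ∈ convexHull 𝕜 ((I.erase v : Finset E) : Set E) := by
  obtain ⟨μ, hμ0, hμ1, rfl⟩ := mem_convexHull'.1 hx
  have hneg : ∃ v ∈ I, ν v < 0 := by
    by_contra! h
    exact hz (mem_convexHull'.2 ⟨ν, h, hν, rfl⟩)
  obtain ⟨τ, hτ, v, hv, hnonneg, hzero⟩ := exists_mix_nonneg_eq_zero hμ0 hneg
  refine ⟨v, hv, τ, hτ, mem_convexHull'.2 ⟨fun u => (1 - τ) * ν u + τ * μ u,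
    fun u hu => hnonneg u (mem_of_mem_erase hu), ?_, ?_⟩⟩
  · rw [sum_erase (f := fun u => (1 - τ) * ν u + τ * μ u) _ hzero, sum_add_distrib, ← mul_sum,
      ← mul_sum, hν, hμ1]
    ring
  · rw [sum_erase (f := fun u => ((1 - τ) * ν u + τ * μ u) • u) _ (by rw [hzero, zero_smul])]
    simp only [AffineMap.lineMap_apply_module, smul_sum, add_smul, mul_smul, sum_add_distrib]

lemma IsExtreme.mem_of_lineMap_mem {A B : Set E} (hAB : IsExtreme 𝕜 A B) {x z : E}
    (hx : x ∈ A) (hz : z ∈ A) {τ : 𝕜} (hτ : τ ∈ Set.Ioc 0 1)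
    (h : AffineMap.lineMap z x τ ∈ B) : x ∈ B := by
  rcases hτ.2.eq_or_lt with rfl | hτ1
  · simpa using h
  · exact hAB.right_mem_of_mem_openSegment hz hx h (lineMap_mem_openSegment 𝕜 z x ⟨hτ.1, hτ1⟩)

lemma sum_smul_mem_convexHull_of_eq_zero {V I : Finset E} (hIV : I ⊆ V) {w : E → 𝕜}
    (hw0 : ∀ v ∈ V, 0 ≤ w v) (hw1 : ∑ v ∈ V, w v = 1) (hwI : ∀ v ∈ V, v ∉ I → w v = 0) :
    ∑ v ∈ V, w v • v ∈ convexHull 𝕜 (I : Set E) := by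
  rw [← sum_subset hIV fun v hv hvI => by rw [hwI v hv hvI, zero_smul]]
  exact mem_convexHull'.2 ⟨w, fun v hv => hw0 v (hIV hv), by rwa [sum_subset hIV hwI], rfl⟩

lemma disjoint_convexHull_of_lt_of_lt (f : E →ₗ[𝕜] 𝕜) (c : 𝕜) {s t : Set E}
    (hs : ∀ x ∈ s, f x < c) (ht : ∀ x ∈ t, c < f x) :
    Disjoint (convexHull 𝕜 s) (convexHull 𝕜 t) :=
  Set.disjoint_left.2 fun _ hxs hxt =>
    lt_asymm (convexHull_min hs (convex_halfSpace_lt f.isLinear c) hxs)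
      (convexHull_min ht (convex_halfSpace_gt f.isLinear c) hxt)

theorem isExtreme_convexHull_of_isExtreme_erase [DecidableEq E] {V I : Finset E} (hIV : I ⊆ V)
    (hdisj : Disjoint (convexHull 𝕜 (I : Set E)) (convexHull 𝕜 ((V \ I : Finset E) : Set E)))
    (hfaces : ∀ v ∈ I,
      IsExtreme 𝕜 (convexHull 𝕜 (V : Set E)) (convexHull 𝕜 ((I.erase v : Finset E) : Set E))) :
    IsExtreme 𝕜 (convexHull 𝕜 (V : Set E)) (convexHull 𝕜 (I : Set E)) := by
  have hIV' : convexHull 𝕜 (I : Set E) ⊆ convexHull 𝕜 (V : Set E) :=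
    convexHull_mono (coe_subset.2 hIV)
  refine ⟨hIV', ?_⟩
  rintro x₁ hx₁ x₂ hx₂ x hx hseg
  obtain ⟨t₁, t₂, ht₁, ht₂, ht, hx₁₂⟩ := id hseg
  obtain ⟨α, hα0, hα1, hαx⟩ := mem_convexHull'.1 hx₁
  obtain ⟨β, hβ0, hβ1, hβx⟩ := mem_convexHull'.1 hx₂
  set w : E → 𝕜 := fun v => t₁ * α v + t₂ * β v
  have hw0 : ∀ v ∈ V, 0 ≤ w v := fun v hv =>
    add_nonneg (mul_nonneg ht₁.le (hα0 v hv)) (mul_nonneg ht₂.le (hβ0 v hv))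
  have hw1 : ∑ v ∈ V, w v = 1 := by
    simp only [w, sum_add_distrib, ← mul_sum, hα1, hβ1, mul_one, ht]
  have hwx : ∑ v ∈ V, w v • v = x := by
    simp only [w, add_smul, mul_smul, sum_add_distrib, ← smul_sum, hαx, hβx, hx₁₂]
  have hw0' : ∀ v ∈ V \ I, 0 ≤ w v := fun v hv => hw0 v (mem_sdiff.1 hv).1
  rcases (sum_nonneg hw0').eq_or_lt with hs | hs
  · refine hαx ▸ sum_smul_mem_convexHull_of_eq_zero hIV hα0 hα1 fun v hv hvI => ?_
    have hwv : w v = 0 := (sum_eq_zero_iff_of_nonneg hw0').1 hs.symm v (mem_sdiff.2 ⟨hv, hvI⟩)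
    nlinarith [hα0 v hv, mul_nonneg ht₂.le (hβ0 v hv)]
  · obtain ⟨μ, -, hμ1, hμx⟩ := mem_convexHull'.1 hx
    obtain ⟨ν, hν1, hνz⟩ :=
      exists_sum_eq_centerMass_sdiff hIV hw1 hs.ne' hμ1 (hμx.trans hwx.symm)
    have hz : (V \ I).centerMass w id ∈ convexHull 𝕜 ((V \ I : Finset E) : Set E) :=
      centerMass_id_mem_convexHull _ hw0' hs
    obtain ⟨v, hv, τ, hτ, hq⟩ :=
      exists_lineMap_mem_convexHull_erase hx hν1 (hνz ▸ hdisj.notMem_of_mem_right hz)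
    have hxv : x ∈ convexHull 𝕜 ((I.erase v : Finset E) : Set E) :=
      (hfaces v hv).mem_of_lineMap_mem (hIV' hx)
        (convexHull_mono (coe_subset.2 sdiff_subset) hz) hτ (hνz ▸ hq)
    exact convexHull_mono (coe_subset.2 (erase_subset v I))
      ((hfaces v hv).left_mem_of_mem_openSegment hx₁ hx₂ hxv hseg)

end

theorem stmt5 (d : ℕ) (V : Finset (EuclideanSpace ℝ (Fin d)))
    (I : Finset (EuclideanSpace ℝ (Fin d))) (hIV : I ⊆ V)
    -- I is a k-set: some hyperplane strictly separates I from V \ I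
    (hsep : ∃ (a : EuclideanSpace ℝ (Fin d)) (c : ℝ),
      (∀ x ∈ I, ⟪a, x⟫ < c) ∧ ∀ x ∈ V, x ∉ I → c < ⟪a, x⟫)
    -- every proper subset of I spans a face of conv(V)
    (hproper : ∀ J : Finset (EuclideanSpace ℝ (Fin d)), J ⊂ I →
      IsExtreme ℝ (convexHull ℝ (V : Set (EuclideanSpace ℝ (Fin d))))
        (convexHull ℝ (J : Set (EuclideanSpace ℝ (Fin d))))) :
    -- then I itself spans a face of conv(V): I is not a missing face
    IsExtreme ℝ (convexHull ℝ (V : Set (EuclideanSpace ℝ (Fin d))))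
      (convexHull ℝ (I : Set (EuclideanSpace ℝ (Fin d)))) := by
  classical
  obtain ⟨a, c, haI, haV⟩ := hsep
  have hdisj := disjoint_convexHull_of_lt_of_lt (innerₗ _ a) c (s := I) haI
    (t := (V \ I : Finset _)) fun x hx => haV x (mem_sdiff.1 hx).1 (mem_sdiff.1 hx).2
  exact isExtreme_convexHull_of_isExtreme_erase hIV hdisj fun v hv =>
    hproper _ (erase_ssubset hv)
end

section
/- Let P be a k-neighborly d-polytope with vertex set V, i.e. every k-element subset of V spans a face of P. If I ⊆ V with |I| = k+1 can be strictly separated from V\I by a hyperplane, then conv(I) is a face of P. -/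
open scoped RealInnerProductSpace

private lemma extreme_of_centerMass {E : Type*} [AddCommGroup E] [Module ℝ E]
    {A B : Set E} (hA : Convex ℝ A) (hAB : IsExtreme ℝ A B) :
    ∀ (s : Finset E) (w : E → ℝ), (∀ i ∈ s, 0 < w i) →
      (∀ i ∈ s, (i : E) ∈ A) → s.centerMass w id ∈ B → ∀ i ∈ s, (i : E) ∈ B := by
  classical
  intro s
  induction s using Finset.induction with
  | empty => intro w _ _ _ j hj; simp at hj
  | @insert i s hi ih =>
    intro w hw hmemA hB j hj
    rcases s.eq_empty_or_nonempty with rfl | hs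
    · simp only [Finset.mem_insert, Finset.notMem_empty, or_false] at hj
      subst hj
      have : ({j} : Finset E).centerMass w id = j :=
        Finset.centerMass_singleton _ _ (ne_of_gt (hw j (by simp)))
      rwa [show (insert j (∅ : Finset E)) = {j} from rfl, this] at hB
    · have hwi : 0 < w i := hw i (Finset.mem_insert_self _ _)
      have hws : 0 < ∑ j ∈ s, w j :=
        Finset.sum_pos (fun j hj => hw j (Finset.mem_insert_of_mem hj)) hs
      have htot : 0 < w i + ∑ j ∈ s, w j := by linarith
      have hcm := Finset.centerMass_insert (w := w) (z := id) (i := i) (t := s) hi (ne_of_gt hws)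
      have hcmA : s.centerMass w id ∈ A :=
        hA.centerMass_mem (fun j hj => le_of_lt (hw j (Finset.mem_insert_of_mem hj))) hws
          (fun j hj => hmemA j (Finset.mem_insert_of_mem hj))
      have hseg : (insert i s).centerMass w id ∈ openSegment ℝ i (s.centerMass w id) := by
        refine ⟨w i / (w i + ∑ j ∈ s, w j), (∑ j ∈ s, w j) / (w i + ∑ j ∈ s, w j),
          div_pos hwi htot, div_pos hws htot, by field_simp, ?_⟩
        rw [hcm]; rfl
      have h1 := hAB.2 (hmemA i (Finset.mem_insert_self _ _)) hcmA hB hseg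
      have h2 := hAB.2 hcmA (hmemA i (Finset.mem_insert_self _ _)) hB (by rw [openSegment_symm]; exact hseg)
      rcases Finset.mem_insert.1 hj with rfl | hjs
      · exact h1
      · exact ih w (fun j hj => hw j (Finset.mem_insert_of_mem hj))
          (fun j hj => hmemA j (Finset.mem_insert_of_mem hj)) h2 j hjs

theorem stmt6 (d k : ℕ) (V : Finset (EuclideanSpace ℝ (Fin d)))
    -- P = conv(V) is a d-polytope with vertex set V
    (hdim : Module.finrank ℝ
      (affineSpan ℝ (V : Set (EuclideanSpace ℝ (Fin d)))).direction = d)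
    (hvert : ∀ v ∈ V, v ∈ Set.extremePoints ℝ
      (convexHull ℝ (V : Set (EuclideanSpace ℝ (Fin d)))))
    -- P is k-neighborly: every subset of V of size at most k spans a face
    (hneigh : ∀ J : Finset (EuclideanSpace ℝ (Fin d)), J ⊆ V → J.card ≤ k →
      IsExtreme ℝ (convexHull ℝ (V : Set (EuclideanSpace ℝ (Fin d))))
        (convexHull ℝ (J : Set (EuclideanSpace ℝ (Fin d)))))
    -- I is a (k+1)-set
    (I : Finset (EuclideanSpace ℝ (Fin d))) (hIV : I ⊆ V) (hIcard : I.card = k + 1)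
    (hsep : ∃ (a : EuclideanSpace ℝ (Fin d)) (c : ℝ),
      (∀ x ∈ I, ⟪a, x⟫ < c) ∧ ∀ x ∈ V, x ∉ I → c < ⟪a, x⟫) :
    -- then conv(I) is a face of P
    IsExtreme ℝ (convexHull ℝ (V : Set (EuclideanSpace ℝ (Fin d))))
      (convexHull ℝ (I : Set (EuclideanSpace ℝ (Fin d)))) := by
  classical
  obtain ⟨a, c, haI, haV⟩ := hsep
  have hIV' : (I : Set (EuclideanSpace ℝ (Fin d))) ⊆ (V : Set (EuclideanSpace ℝ (Fin d))) := Finset.coe_subset.mpr hIV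
  have hconvV : Convex ℝ (convexHull ℝ (V : Set (EuclideanSpace ℝ (Fin d)))) := convex_convexHull ℝ _
  refine ⟨convexHull_mono hIV', ?_⟩
  intro x₁ hx₁ x₂ hx₂ x hx hseg
  obtain ⟨t, u, ht, hu, htu, hx'⟩ := hseg
  obtain ⟨w₁, hw₁0, hw₁1, hw₁x⟩ := Finset.mem_convexHull'.1 hx₁
  obtain ⟨w₂, hw₂0, hw₂1, hw₂x⟩ := Finset.mem_convexHull'.1 hx₂
  obtain ⟨μ, hμ0, hμ1, hμx⟩ := Finset.mem_convexHull'.1 hx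
  set γ : EuclideanSpace ℝ (Fin d) → ℝ := fun v => t * w₁ v + u * w₂ v with hγdef
  set δ : EuclideanSpace ℝ (Fin d) → ℝ := fun v => γ v - (if v ∈ I then μ v else 0) with hδdef
  have hγ0 : ∀ v ∈ V, 0 ≤ γ v := fun v hv =>
    add_nonneg (mul_nonneg ht.le (hw₁0 v hv)) (mul_nonneg hu.le (hw₂0 v hv))
  -- sums of the I-supported weight
  have hμ'sum : ∑ v ∈ V, (if v ∈ I then μ v else 0) = 1 := by
    rw [Finset.sum_ite_mem, Finset.inter_eq_right.mpr hIV]; exact hμ1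
  have hμ'vec : ∑ v ∈ V, (if v ∈ I then μ v else 0) • v = x := by
    have : ∀ v : EuclideanSpace ℝ (Fin d), (if v ∈ I then μ v else 0) • v = (if v ∈ I then μ v • v else 0) := by
      intro v; split <;> simp
    rw [Finset.sum_congr rfl fun v _ => this v, Finset.sum_ite_mem,
      Finset.inter_eq_right.mpr hIV]; exact hμx
  have hδsum : ∑ v ∈ V, δ v = 0 := by
    simp only [hδdef, hγdef, Finset.sum_sub_distrib, Finset.sum_add_distrib, ← Finset.mul_sum,
      hw₁1, hw₂1, hμ'sum, mul_one]
    linarith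
  have hδvec : ∑ v ∈ V, δ v • v = 0 := by
    simp only [hδdef, hγdef, sub_smul, add_smul, mul_smul, Finset.sum_sub_distrib,
      Finset.sum_add_distrib, ← Finset.smul_sum, hw₁x, hw₂x, hμ'vec]
    rw [← hx']
    abel
  set N : Finset (EuclideanSpace ℝ (Fin d)) := V.filter (fun v => δ v < 0) with hNdef
  set Pos : Finset (EuclideanSpace ℝ (Fin d)) := V.filter (fun v => 0 < δ v) with hPosdef
  have hNV : N ⊆ V := Finset.filter_subset _ _
  have hPosV : Pos ⊆ V := Finset.filter_subset _ _
  have hNneg : ∀ v ∈ N, δ v < 0 := fun v hv => (Finset.mem_filter.1 hv).2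
  have hPospos : ∀ v ∈ Pos, 0 < δ v := fun v hv => (Finset.mem_filter.1 hv).2
  have hNI : N ⊆ I := by
    intro v hv
    obtain ⟨hvV, hvneg⟩ := Finset.mem_filter.1 hv
    by_contra hvI
    have : δ v = γ v := by simp [hδdef, hvI]
    linarith [hγ0 v hvV]
  -- splitting of the sums
  have hsub : N ⊆ V.filter (fun v => ¬ 0 < δ v) := by
    intro v hv
    obtain ⟨hvV, hvneg⟩ := Finset.mem_filter.1 hv
    exact Finset.mem_filter.2 ⟨hvV, by linarith⟩
  have hzero : ∀ v ∈ V.filter (fun v => ¬ 0 < δ v), v ∉ N → δ v = 0 := by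
    intro v hv hvN
    obtain ⟨hvV, hvnp⟩ := Finset.mem_filter.1 hv
    have : ¬ δ v < 0 := fun h => hvN (Finset.mem_filter.2 ⟨hvV, h⟩)
    linarith
  have hsplit : ∑ v ∈ Pos, δ v + ∑ v ∈ N, δ v = 0 := by
    rw [Finset.sum_subset hsub (fun v hv hvN => hzero v hv hvN)]
    rw [Finset.sum_filter_add_sum_filter_not V (fun v => 0 < δ v) δ] at *
    exact hδsum
  have hsplitv : ∑ v ∈ Pos, δ v • v + ∑ v ∈ N, δ v • v = 0 := by
    rw [Finset.sum_subset hsub (fun v hv hvN => by rw [hzero v hv hvN, zero_smul])]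
    rw [Finset.sum_filter_add_sum_filter_not V (fun v => 0 < δ v) (fun v => δ v • v)] at *
    exact hδvec
  by_cases hN : N = ∅
  · -- δ vanishes; both endpoints have weights supported on I
    have hδ0 : ∀ v ∈ V, δ v = 0 := by
      have hnn : ∀ v ∈ V, 0 ≤ δ v := by
        intro v hv
        by_contra h
        exact (Finset.eq_empty_iff_forall_notMem.1 hN v)
          (Finset.mem_filter.2 ⟨hv, by linarith⟩)
      exact fun v hv => (Finset.sum_eq_zero_iff_of_nonneg hnn).1 hδsum v hv
    have hw0 : ∀ v ∈ V, v ∉ I → w₁ v = 0 ∧ w₂ v = 0 := by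
      intro v hv hvI
      have h1 : δ v = γ v := by simp [hδdef, hvI]
      have h2 : γ v = 0 := by rw [← h1]; exact hδ0 v hv
      have hp1 : 0 ≤ t * w₁ v := mul_nonneg ht.le (hw₁0 v hv)
      have hp2 : 0 ≤ u * w₂ v := mul_nonneg hu.le (hw₂0 v hv)
      have hq1 : t * w₁ v = 0 := by simp only [hγdef] at h2; linarith
      have hq2 : u * w₂ v = 0 := by simp only [hγdef] at h2; linarith
      exact ⟨by rcases mul_eq_zero.1 hq1 with h | h; exacts [absurd h (ne_of_gt ht), h],
        by rcases mul_eq_zero.1 hq2 with h | h; exacts [absurd h (ne_of_gt hu), h]⟩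
    have hs1 : ∑ y ∈ I, w₁ y = 1 := by
      rw [← hw₁1]; exact Finset.sum_subset hIV (fun v hv hvI => (hw0 v hv hvI).1)
    have hs2 : ∑ y ∈ I, w₂ y = 1 := by
      rw [← hw₂1]; exact Finset.sum_subset hIV (fun v hv hvI => (hw0 v hv hvI).2)
    have hv1 : ∑ y ∈ I, w₁ y • y = x₁ := by
      rw [← hw₁x]
      exact Finset.sum_subset hIV (fun v hv hvI => by rw [(hw0 v hv hvI).1, zero_smul])
    have hv2 : ∑ y ∈ I, w₂ y • y = x₂ := by
      rw [← hw₂x]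
      exact Finset.sum_subset hIV (fun v hv hvI => by rw [(hw0 v hv hvI).2, zero_smul])
    exact Finset.mem_convexHull'.2 ⟨w₁, fun y hy => hw₁0 y (hIV hy), hs1, hv1⟩
  · exfalso
    have hNne : N.Nonempty := Finset.nonempty_of_ne_empty hN
    have hsN : 0 < ∑ v ∈ N, -δ v :=
      Finset.sum_pos (fun v hv => by linarith [hNneg v hv]) hNne
    have hsPos : ∑ v ∈ Pos, δ v = ∑ v ∈ N, -δ v := by
      rw [Finset.sum_neg_distrib]; linarith
    have hPosne : Pos.Nonempty := by
      rw [Finset.nonempty_iff_ne_empty]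
      intro h
      rw [h, Finset.sum_empty] at hsPos
      linarith
    set p : EuclideanSpace ℝ (Fin d) := N.centerMass (fun v => -δ v) id with hpdef
    have hpN : p ∈ convexHull ℝ (N : Set (EuclideanSpace ℝ (Fin d))) :=
      N.centerMass_mem_convexHull (fun v hv => by linarith [hNneg v hv]) hsN
        (fun v hv => Finset.mem_coe.2 hv)
    have hpPos : Pos.centerMass δ id = p := by
      rw [hpdef, show (fun v : EuclideanSpace ℝ (Fin d) => -δ v) = -δ from rfl, Finset.centerMass_neg_left]
      exact Finset.centerMass_of_sum_add_sum_eq_zero hsplit hsplitv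
    -- inner product with centerMass
    have key : ∀ (s : Finset (EuclideanSpace ℝ (Fin d))) (w : EuclideanSpace ℝ (Fin d) → ℝ),
        ⟪a, s.centerMass w id⟫ = (∑ v ∈ s, w v)⁻¹ * ∑ v ∈ s, w v * ⟪a, v⟫ := by
      intro s w
      rw [Finset.centerMass, real_inner_smul_right, inner_sum]
      simp only [real_inner_smul_right, id]
    by_cases hNIeq : N = I
    · -- separation contradiction
      have hPosI : ∀ v ∈ Pos, v ∉ I := by
        intro v hv hvI
        have : δ v < 0 := hNneg v (hNIeq ▸ hvI)
        linarith [hPospos v hv]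
      set S : ℝ := ∑ v ∈ N, -δ v with hSdef
      have h1 : ∑ v ∈ N, (-δ v) * ⟪a, v⟫ < S * c := by
        rw [hSdef, Finset.sum_mul]
        exact Finset.sum_lt_sum_of_nonempty hNne (fun v hv =>
          mul_lt_mul_of_pos_left (haI v (hNI hv)) (by linarith [hNneg v hv]))
      have h2 : S * c < ∑ v ∈ Pos, δ v * ⟪a, v⟫ := by
        rw [← hsPos, Finset.sum_mul]
        exact Finset.sum_lt_sum_of_nonempty hPosne (fun v hv =>
          mul_lt_mul_of_pos_left (haV v (hPosV hv) (hPosI v hv)) (hPospos v hv))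
      have e1 : ⟪a, p⟫ = S⁻¹ * ∑ v ∈ N, (-δ v) * ⟪a, v⟫ := key N (fun v => -δ v)
      have e2 : ⟪a, p⟫ = S⁻¹ * ∑ v ∈ Pos, δ v * ⟪a, v⟫ := by
        rw [← hpPos, key Pos δ, hsPos]
      have hSinv : 0 < S⁻¹ := inv_pos.2 hsN
      have hcc : S⁻¹ * (S * c) = c := by field_simp
      have l1 : ⟪a, p⟫ < c := by
        rw [e1, ← hcc]; exact mul_lt_mul_of_pos_left h1 hSinv
      have l2 : c < ⟪a, p⟫ := by
        rw [e2, ← hcc]; exact mul_lt_mul_of_pos_left h2 hSinv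
      linarith
    · -- N is a proper subset of I: use neighborliness
      have hcard : N.card ≤ k := by
        have : N ⊂ I := Finset.ssubset_iff_subset_ne.2 ⟨hNI, hNIeq⟩
        have := Finset.card_lt_card this
        omega
      have hFace := hneigh N (hNI.trans hIV) hcard
      have hmem : ∀ v ∈ Pos, v ∈ convexHull ℝ (N : Set (EuclideanSpace ℝ (Fin d))) :=
        extreme_of_centerMass hconvV hFace Pos δ hPospos
          (fun v hv => subset_convexHull ℝ _ (Finset.mem_coe.2 (hPosV hv)))
          (hpPos ▸ hpN)
      obtain ⟨v, hv⟩ := hPosne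
      have hvex := hvert v (hPosV hv)
      have hvexN : v ∈ (convexHull ℝ (N : Set (EuclideanSpace ℝ (Fin d)))).extremePoints ℝ := by
        refine ⟨hmem v hv, fun y₁ h₁ y₂ h₂ hs => ?_⟩
        exact hvex.2 ((convexHull_mono (Finset.coe_subset.mpr hNV)) h₁)
          ((convexHull_mono (Finset.coe_subset.mpr hNV)) h₂) hs
      have hvN : v ∈ N := extremePoints_convexHull_subset hvexN
      linarith [hNneg v hvN, hPospos v hv]
end

section
/- For two points v, w in Euclidean d-space lying outside the closed unit ball, the spherical caps {s ∈ S : ⟨v,s⟩ ≥ 1} and {s ∈ S : ⟨w,s⟩ ≥ 1} on the unit sphere S have disjoint interiors if and only if the closed segment [v,w] intersects the closed unit ball. -/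
open scoped RealInnerProductSpace

/-!
A unit vector `s` lies in the interiors of both caps iff the open half-space
`{x | 1 < ⟪x, s⟫}` contains `v` and `w`, hence (by convexity) the whole segment `[v, w]`.
Since the closed unit ball is exactly the set of points `x` with `⟪x, s⟫ ≤ 1` for every unit `s`,
such an `s` exists iff the segment misses the ball: for the converse take `s = p / ‖p‖`, where `p`
is the point of the segment closest to the origin.
-/

section InnerProductSpace

variable {E : Type*} [NormedAddCommGroup E] [InnerProductSpace ℝ E]

theorem exists_mem_forall_norm_sq_le_inner {K : Set E} (hne : K.Nonempty) (hcompl : IsComplete K)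
    (hconv : Convex ℝ K) : ∃ p ∈ K, ∀ u ∈ K, ‖p‖ ^ 2 ≤ ⟪u, p⟫ := by
  obtain ⟨p, hp, hmin⟩ := exists_norm_eq_iInf_of_complete_convex hne hcompl hconv 0
  refine ⟨p, hp, fun u hu => ?_⟩
  have hobtuse := (norm_eq_iInf_iff_real_inner_le_zero hconv hp).1 hmin u hu
  rw [zero_sub, inner_neg_left, inner_sub_right, real_inner_self_eq_norm_sq,
    real_inner_comm] at hobtuse
  linarith

theorem disjoint_closedBall_of_one_lt_inner {K : Set E} {s : E} (hs : ‖s‖ = 1)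
    (hK : ∀ x ∈ K, 1 < ⟪x, s⟫) : Disjoint K (Metric.closedBall 0 1) := by
  refine Set.disjoint_left.2 fun x hxK hxB => ?_
  have hx : ‖x‖ ≤ 1 := by simpa using hxB
  have := real_inner_le_norm x s
  rw [hs, mul_one] at this
  linarith [hK x hxK]

theorem exists_norm_eq_one_forall_one_lt_inner {K : Set E} (hne : K.Nonempty)
    (hcompl : IsComplete K) (hconv : Convex ℝ K) (hdisj : Disjoint K (Metric.closedBall 0 1)) :
    ∃ s : E, ‖s‖ = 1 ∧ ∀ x ∈ K, 1 < ⟪x, s⟫ := by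
  obtain ⟨p, hp, hnear⟩ := exists_mem_forall_norm_sq_le_inner hne hcompl hconv
  have hp1 : 1 < ‖p‖ := by
    simpa using Set.disjoint_left.1 hdisj hp
  have hp0 : 0 < ‖p‖ := one_pos.trans hp1
  refine ⟨‖p‖⁻¹ • p, by simp [norm_smul, hp0.ne'], fun x hx => ?_⟩
  rw [real_inner_smul_right, inv_mul_eq_div, lt_div_iff₀ hp0, one_mul]
  nlinarith [hnear x hx]

theorem forall_mem_segment_one_lt_inner_iff {v w s : E} :
    (∀ x ∈ segment ℝ v w, 1 < ⟪x, s⟫) ↔ 1 < ⟪v, s⟫ ∧ 1 < ⟪w, s⟫ := by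
  refine ⟨fun h => ⟨h v (left_mem_segment ℝ v w), h w (right_mem_segment ℝ v w)⟩,
    fun ⟨hv, hw⟩ => ?_⟩
  have hconv : Convex ℝ {x : E | 1 < ⟪x, s⟫} :=
    convex_halfSpace_gt (innerₛₗ ℝ |>.flip s).isLinear 1
  exact hconv.segment_subset hv hw

theorem exists_norm_eq_one_one_lt_inner_iff_disjoint_segment (v w : E) :
    (∃ s : E, ‖s‖ = 1 ∧ 1 < ⟪v, s⟫ ∧ 1 < ⟪w, s⟫) ↔
      Disjoint (segment ℝ v w) (Metric.closedBall 0 1) := by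
  simp only [← forall_mem_segment_one_lt_inner_iff]
  refine ⟨fun ⟨s, hs, hK⟩ => disjoint_closedBall_of_one_lt_inner hs hK, fun hdisj => ?_⟩
  have hcompact : IsCompact (segment ℝ v w) := by
    rw [segment_eq_image]
    exact isCompact_Icc.image (by fun_prop)
  exact exists_norm_eq_one_forall_one_lt_inner ⟨v, left_mem_segment ℝ v w⟩
    hcompact.isComplete (convex_segment v w) hdisj

end InnerProductSpace

theorem stmt8_general (d : ℕ) (v w : EuclideanSpace ℝ (Fin d)) :
    -- the caps of v and w on the unit sphere have disjoint interiors
    (¬ ∃ s : EuclideanSpace ℝ (Fin d), ‖s‖ = 1 ∧ 1 < ⟪v, s⟫ ∧ 1 < ⟪w, s⟫) ↔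
      -- iff the segment [v,w] meets the closed unit ball
      (segment ℝ v w ∩ Metric.closedBall 0 1).Nonempty := by
  rw [exists_norm_eq_one_one_lt_inner_iff_disjoint_segment, Set.not_disjoint_iff_nonempty_inter]

theorem stmt8 (d : ℕ) (v w : EuclideanSpace ℝ (Fin d))
    (hv : 1 < ‖v‖) (hw : 1 < ‖w‖) :
    -- the caps of v and w on the unit sphere have disjoint interiors
    (¬ ∃ s : EuclideanSpace ℝ (Fin d), ‖s‖ = 1 ∧ 1 < ⟪v, s⟫ ∧ 1 < ⟪w, s⟫) ↔
      -- iff the segment [v,w] meets the closed unit ball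
      (segment ℝ v w ∩ Metric.closedBall 0 1).Nonempty :=
  stmt8_general d v w
end

section
/- Any weakly circumscribed convex polygon in the Euclidean plane with more than 4 edges is strongly circumscribed. That is, if P is a convex polygon with at least 5 edges such that the affine line spanned by each edge is tangent to the unit circle, then in fact the unit disk is contained in P and each edge touches the unit circle. -/
/-!
If some edge line separates `P` from the unit disk, then `P` lies in the half-plane `⟪u, x⟫ ≥ 1`
beyond the tangent at some unit `u` and touches it. In the coordinates `(⟪u, x⟫, ω u x)`, with `ω`
an area form, every other edge line is the tangent with a nonzero half-angle parameter `τ`. For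
two parameters of the same sign, the point where `P` touches the farther tangent lies strictly
beyond the nearer one, so the nearer edge separates as well. Three parameters of one sign would
put `P` on both sides of the middle tangent, and two of each sign give incompatible bounds on the
second coordinate of a point of `P` on the tangent at `u`; so there are at most four edges.

Otherwise `P` lies on the side of the disk of every edge line. Turning a direction `n` both ways
until a second vertex ties with the vertex `p` maximising `⟪n, ·⟫` produces two edge normals whose
support value equals their norm; `n` lies between them, so `‖n‖ ≤ ⟪n, p⟫` by the triangle
inequality. Hence the support function of `P` dominates the norm and the disk lies in `P`; each
tangent point then lies in `P` on its edge line, that is, on the edge.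
-/

/-- The set of edges of a planar convex body `P`: its one-dimensional exposed faces. -/
def edgeSet (P : Set (EuclideanSpace ℝ (Fin 2))) : Set (Set (EuclideanSpace ℝ (Fin 2))) :=
  {F | IsExposed ℝ P F ∧ Module.finrank ℝ (affineSpan ℝ F).direction = 1}

open scoped RealInnerProductSpace
open Module

/-- `tangentForm τ` vanishes exactly on the tangent to the unit circle at
`((1 - τ²) / (1 + τ²), 2τ / (1 + τ²))`; this tangent meets the tangent `x = 1` at `(1, τ)`. -/
def tangentForm (τ : ℝ) (z : ℝ × ℝ) : ℝ :=
  (1 - τ ^ 2) * z.1 + 2 * τ * z.2 - (1 + τ ^ 2)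

def TangentSupports (Q : Set (ℝ × ℝ)) (τ : ℝ) : Prop :=
  (∃ z ∈ Q, tangentForm τ z = 0) ∧
    ((∀ z ∈ Q, tangentForm τ z ≤ 0) ∨ ∀ z ∈ Q, 0 ≤ tangentForm τ z)

section TangentLines

variable {a b c : ℝ} {z : ℝ × ℝ} {Q : Set (ℝ × ℝ)}

lemma mul_tangentForm_of_tangentForm_eq_zero (h : tangentForm b z = 0) :
    b * tangentForm a z = (b - a) * ((1 + a * b) * z.1 - 1 + a * b) := by
  unfold tangentForm at *
  linear_combination a * h

lemma tangentForm_pos_of_sq_lt (hz : 1 ≤ z.1) (hb : tangentForm b z = 0) (hab : 0 < a * b)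
    (hsq : a ^ 2 < b ^ 2) : 0 < tangentForm a z := by
  have key := mul_tangentForm_of_tangentForm_eq_zero (a := a) hb
  have hK : 2 * (a * b) ≤ (1 + a * b) * z.1 - 1 + a * b := by nlinarith
  have hbab : 0 < b * (b - a) := by nlinarith [sq_nonneg (a - b)]
  have : 0 < b ^ 2 * tangentForm a z := by
    have := mul_pos hbab (by linarith : 0 < (1 + a * b) * z.1 - 1 + a * b)
    calc 0 < b * (b - a) * ((1 + a * b) * z.1 - 1 + a * b) := this
      _ = b ^ 2 * tangentForm a z := by linear_combination -b * key
  exact pos_of_mul_pos_right this (sq_nonneg b)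

lemma tangentForm_neg_of_sq_lt (hz : 1 ≤ z.1) (ha : tangentForm a z = 0) (hab : 0 < a * b)
    (hsq : a ^ 2 < b ^ 2) : tangentForm b z < 0 := by
  have key := mul_tangentForm_of_tangentForm_eq_zero (a := b) ha
  have hK : 2 * (a * b) ≤ (1 + b * a) * z.1 - 1 + b * a := by nlinarith
  have haba : a * (a - b) < 0 := by nlinarith [sq_nonneg (a - b)]
  have : a ^ 2 * tangentForm b z < 0 := by
    have := mul_neg_of_neg_of_pos haba (by linarith : 0 < (1 + b * a) * z.1 - 1 + b * a)
    calc a ^ 2 * tangentForm b z = a * (a - b) * ((1 + b * a) * z.1 - 1 + b * a) := by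
          linear_combination a * key
      _ < 0 := this
  exact neg_of_mul_neg_right this (sq_nonneg a)

lemma TangentSupports.nonneg_of_sq_lt (hQ : ∀ z ∈ Q, 1 ≤ z.1) (ha : TangentSupports Q a)
    (hb : TangentSupports Q b) (hab : 0 < a * b) (hsq : a ^ 2 < b ^ 2) :
    ∀ z ∈ Q, 0 ≤ tangentForm a z := by
  obtain ⟨⟨z, hzQ, hz⟩, -⟩ := hb
  have hpos := tangentForm_pos_of_sq_lt (hQ z hzQ) hz hab hsq
  exact ha.2.resolve_left fun hle => (hle z hzQ).not_gt hpos

lemma not_tangentSupports_of_sq_lt_sq_lt (hQ : ∀ z ∈ Q, 1 ≤ z.1) (hab : 0 < a * b)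
    (hbc : 0 < b * c) (hsq₁ : a ^ 2 < b ^ 2) (hsq₂ : b ^ 2 < c ^ 2) (ha : TangentSupports Q a)
    (hc : TangentSupports Q c) : ¬ TangentSupports Q b := by
  rintro ⟨-, hside⟩
  obtain ⟨z, hzQ, hz⟩ := hc.1
  obtain ⟨z', hz'Q, hz'⟩ := ha.1
  have hpos := tangentForm_pos_of_sq_lt (hQ z hzQ) hz hbc hsq₂
  have hneg := tangentForm_neg_of_sq_lt (hQ z' hz'Q) hz' hab hsq₁
  rcases hside with hle | hge
  · exact (hle z hzQ).not_gt hpos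
  · exact (hge z' hz'Q).not_gt hneg

lemma card_le_two_of_tangentSupports (hQ : ∀ z ∈ Q, 1 ≤ z.1) {T : Finset ℝ}
    (hT : ∀ τ ∈ T, TangentSupports Q τ) (hsign : ∀ a ∈ T, ∀ b ∈ T, 0 < a * b) : T.card ≤ 2 := by
  by_contra! h
  set f := T.orderEmbOfFin rfl
  have hf (i) : f i ∈ T := T.orderEmbOfFin_mem rfl i
  have h01 : f ⟨0, by omega⟩ < f ⟨1, by omega⟩ := f.strictMono (by simp [Fin.lt_def])
  have h12 : f ⟨1, by omega⟩ < f ⟨2, by omega⟩ := f.strictMono (by simp [Fin.lt_def])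
  set x := f ⟨0, by omega⟩
  set y := f ⟨1, by omega⟩
  set z := f ⟨2, by omega⟩
  have hxy := hsign x (hf _) y (hf _)
  have hyz := hsign y (hf _) z (hf _)
  rcases lt_or_gt_of_ne (show y ≠ 0 by rintro h0; simp [h0] at hxy) with hy | hy
  · exact not_tangentSupports_of_sq_lt_sq_lt hQ (by linarith) (by linarith)
      (by nlinarith) (by nlinarith) (hT z (hf _)) (hT x (hf _)) (hT y (hf _))
  · exact not_tangentSupports_of_sq_lt_sq_lt hQ hxy hyz (by nlinarith) (by nlinarith)
      (hT x (hf _)) (hT z (hf _)) (hT y (hf _))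

lemma card_le_three_of_tangentSupports (hQ : ∀ z ∈ Q, 1 ≤ z.1) (hz : z ∈ Q) (hz1 : z.1 = 1)
    {S : Finset ℝ} (h0 : 0 ∉ S) (hS : ∀ τ ∈ S, TangentSupports Q τ) : S.card ≤ 3 := by
  have hneg : ∀ τ ∈ S.filter (¬ 0 < ·), τ < 0 := fun τ hτ => by
    rw [Finset.mem_filter] at hτ
    exact lt_of_le_of_ne (not_lt.1 hτ.2) (ne_of_mem_of_not_mem hτ.1 h0)
  have hpos_card : (S.filter (0 < ·)).card ≤ 2 :=
    card_le_two_of_tangentSupports hQ (fun τ hτ => hS τ (Finset.mem_of_mem_filter τ hτ))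
      fun a ha b hb => mul_pos (Finset.mem_filter.1 ha).2 (Finset.mem_filter.1 hb).2
  have hneg_card : (S.filter (¬ 0 < ·)).card ≤ 2 :=
    card_le_two_of_tangentSupports hQ (fun τ hτ => hS τ (Finset.mem_of_mem_filter τ hτ))
      fun a ha b hb => mul_pos_of_neg_of_neg (hneg a ha) (hneg b hb)
  by_contra! h
  have hsplit := Finset.card_filter_add_card_filter_not (s := S) (0 < ·)
  obtain ⟨a, ha, b, hb, hab⟩ :=
    (Finset.one_lt_card_iff_nontrivial.1 (by omega : 1 < (S.filter (0 < ·)).card)).exists_lt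
  obtain ⟨c, hc, d, hd, hcd⟩ :=
    (Finset.one_lt_card_iff_nontrivial.1 (by omega : 1 < (S.filter (¬ 0 < ·)).card)).exists_lt
  have ha0 := (Finset.mem_filter.1 ha).2
  have hd0 := hneg d hd
  have hza := (hS a (Finset.mem_of_mem_filter a ha)).nonneg_of_sq_lt hQ
    (hS b (Finset.mem_of_mem_filter b hb)) (by nlinarith) (by nlinarith) z hz
  have hzd := (hS d (Finset.mem_of_mem_filter d hd)).nonneg_of_sq_lt hQ
    (hS c (Finset.mem_of_mem_filter c hc)) (by nlinarith) (by nlinarith) z hz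
  unfold tangentForm at hza hzd
  rw [hz1] at hza hzd
  have : a ≤ z.2 := by nlinarith
  have : z.2 ≤ d := by nlinarith
  linarith

lemma tangentForm_div_one_add {c σ : ℝ} (h : c ^ 2 + σ ^ 2 = 1) (hc : 1 + c ≠ 0) (z : ℝ × ℝ) :
    tangentForm (σ / (1 + c)) z = 2 / (1 + c) * (c * z.1 + σ * z.2 - 1) := by
  unfold tangentForm
  field_simp
  linear_combination (-(z.1 + 1)) * h

lemma eq_of_div_one_add {c σ : ℝ} (h : c ^ 2 + σ ^ 2 = 1) (hc : 0 < 1 + c) :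
    c = (1 - (σ / (1 + c)) ^ 2) / (1 + (σ / (1 + c)) ^ 2) ∧
      σ = 2 * (σ / (1 + c)) / (1 + (σ / (1 + c)) ^ 2) := by
  have : (1 + c) ^ 2 + σ ^ 2 ≠ 0 := by positivity
  constructor
  · field_simp
    linear_combination (1 + c) * h
  · field_simp
    linear_combination σ * h

end TangentLines

lemma Finset.exists_nonneg_add_mul_eq_zero {ι : Type*} (s : Finset ι) {a b : ι → ℝ}
    (ha : ∀ i ∈ s, 0 ≤ a i) (hb : ∃ i ∈ s, b i < 0) :
    ∃ t : ℝ, 0 ≤ t ∧ (∀ i ∈ s, 0 ≤ a i + t * b i) ∧ ∃ i ∈ s, b i < 0 ∧ a i + t * b i = 0 := by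
  classical
  obtain ⟨i₀, hi₀, hmin⟩ := (s.filter (b · < 0)).exists_min_image (fun i => a i / -b i)
    (by simpa [Finset.filter_nonempty_iff] using hb)
  rw [Finset.mem_filter] at hi₀
  have hb₀ : 0 < -b i₀ := neg_pos.2 hi₀.2
  set t := a i₀ / -b i₀
  have ht : t * -b i₀ = a i₀ := div_mul_cancel₀ _ hb₀.ne'
  refine ⟨t, div_nonneg (ha i₀ hi₀.1) hb₀.le, fun i hi => ?_, i₀, hi₀.1, hi₀.2, by linarith⟩
  rcases lt_or_ge (b i) 0 with hbi | hbi
  · have := hmin i (Finset.mem_filter.2 ⟨hi, hbi⟩)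
    rw [le_div_iff₀ (neg_pos.2 hbi)] at this
    nlinarith
  · exact add_nonneg (ha i hi) (mul_nonneg (div_nonneg (ha i₀ hi₀.1) hb₀.le) hbi)

section InnerProductSpace

variable {E : Type*} [NormedAddCommGroup E] [InnerProductSpace ℝ E]

def LineSupports (P : Set E) (s : E) : Prop :=
  (∃ x ∈ P, ⟪s, x⟫ = 1) ∧ ((∀ x ∈ P, ⟪s, x⟫ ≤ 1) ∨ ∀ x ∈ P, 1 ≤ ⟪s, x⟫)

lemma one_add_inner_pos_of_lineSupports {P : Set E} {u s : E} (hu : ‖u‖ = 1) (hs : ‖s‖ = 1)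
    (hPu : ∀ x ∈ P, 1 ≤ ⟪u, x⟫) (hsP : LineSupports P s) : 0 < 1 + ⟪u, s⟫ := by
  by_contra! h
  have : ‖u + s‖ ^ 2 ≤ 0 := by
    rw [norm_add_sq_real, hu, hs]; linarith
  have hsu : s = -u :=
    eq_neg_of_add_eq_zero_right (norm_eq_zero.1 (by nlinarith [norm_nonneg (u + s)]))
  obtain ⟨x, hxP, hx⟩ := hsP.1
  rw [hsu, inner_neg_left] at hx
  linarith [hPu x hxP]

lemma AffineSubspace.inner_eq_one_of_forall_norm_eq_one_eq {A : AffineSubspace ℝ E} {s : E}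
    (hs : s ∈ A) (hs1 : ‖s‖ = 1) (huniq : ∀ y ∈ A, ‖y‖ = 1 → y = s) {x : E} (hx : x ∈ A) :
    ⟪s, x⟫ = 1 := by
  have hv : x - s ∈ A.direction := A.vsub_mem_direction hx hs
  suffices h : ⟪s, x - s⟫ = 0 by
    rw [inner_sub_right, real_inner_self_eq_norm_sq, hs1] at h
    linarith
  by_contra h
  have hv0 : ⟪x - s, x - s⟫ ≠ 0 := fun h0 => h (by rw [inner_self_eq_zero.1 h0, inner_zero_right])
  obtain ⟨t, ht⟩ : ∃ t : ℝ, t * ⟪x - s, x - s⟫ = -2 * ⟪s, x - s⟫ := ⟨_, div_mul_cancel₀ _ hv0⟩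
  have hmem : t • (x - s) + s ∈ A := A.vadd_mem_of_mem_direction (A.direction.smul_mem t hv) hs
  have hnorm : ‖t • (x - s) + s‖ = 1 := by
    rw [← pow_eq_one_iff_of_nonneg (norm_nonneg _) two_ne_zero, ← real_inner_self_eq_norm_sq,
      real_inner_add_add_self, real_inner_smul_left, real_inner_smul_right, real_inner_smul_left,
      real_inner_self_eq_norm_sq s, hs1, real_inner_comm s (x - s)]
    linear_combination t * ht
  have : t • (x - s) = 0 := add_eq_right.1 (huniq _ hmem hnorm)
  rcases smul_eq_zero.1 this with h0 | h0
  · rw [h0, zero_mul] at ht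
    exact h (by linarith)
  · exact hv0 (by rw [h0, inner_zero_left])

lemma norm_le_inner_of_mem_segment {x y z p : E} (hx : x ∈ segment ℝ y z) (hy : ‖y‖ ≤ ⟪y, p⟫)
    (hz : ‖z‖ ≤ ⟪z, p⟫) : ‖x‖ ≤ ⟪x, p⟫ := by
  obtain ⟨a, b, ha, hb, -, rfl⟩ := hx
  calc ‖a • y + b • z‖ ≤ a * ‖y‖ + b * ‖z‖ := by
        refine (norm_add_le _ _).trans ?_
        rw [norm_smul_of_nonneg ha, norm_smul_of_nonneg hb]
    _ ≤ a * ⟪y, p⟫ + b * ⟪z, p⟫ := by gcongr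
    _ = ⟪a • y + b • z, p⟫ := by rw [inner_add_left, real_inner_smul_left, real_inner_smul_left]

lemma exists_inner_eq_norm_of_tie {V : Finset E}
    (htie : ∀ m, ∀ p ∈ V, ∀ q ∈ V, q ≠ p → (∀ r ∈ V, ⟪m, r⟫ ≤ ⟪m, p⟫) → ⟪m, q⟫ = ⟪m, p⟫ →
      ⟪m, p⟫ = ‖m‖)
    {n p d : E} (hp : p ∈ V) (hmax : ∀ q ∈ V, ⟪n, q⟫ ≤ ⟪n, p⟫) (hd : ∃ q ∈ V, ⟪d, p⟫ < ⟪d, q⟫) :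
    ∃ t : ℝ, 0 ≤ t ∧ ⟪n + t • d, p⟫ = ‖n + t • d‖ := by
  obtain ⟨t, ht, hall, q, hq, hdq, hq0⟩ := V.exists_nonneg_add_mul_eq_zero
    (a := fun q => ⟪n, p - q⟫) (b := fun q => ⟪d, p - q⟫)
    (fun q hq => by simpa [inner_sub_right] using hmax q hq) (by simpa [inner_sub_right] using hd)
  have hinner (r : E) : ⟪n + t • d, p - r⟫ = ⟪n, p - r⟫ + t * ⟪d, p - r⟫ := by
    rw [inner_add_left, real_inner_smul_left]
  refine ⟨t, ht, htie _ p hp q hq (by rintro rfl; simp at hdq) (fun r hr => ?_) ?_⟩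
  · have := hall r hr
    rw [← hinner, inner_sub_right] at this
    linarith
  · have := hinner q
    rw [inner_sub_right] at this
    linarith

lemma exists_inner_lt_and_lt_inner (hE : 2 ≤ finrank ℝ E) {V : Finset E}
    (hV : vectorSpan ℝ (V : Set E) = ⊤) (p : E) :
    ∃ d : E, (∃ q ∈ V, ⟪d, p⟫ < ⟪d, q⟫) ∧ ∃ q ∈ V, ⟪d, q⟫ < ⟪d, p⟫ := by
  obtain ⟨d, hdw, hd0⟩ : ∃ d ∈ (ℝ ∙ ∑ q ∈ V, (p - q))ᗮ, d ≠ 0 := by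
    refine Submodule.exists_mem_ne_zero_of_ne_bot fun h => ?_
    rw [Submodule.orthogonal_eq_bot_iff] at h
    have := finrank_span_le_card (R := ℝ) ({∑ q ∈ V, (p - q)} : Set E)
    rw [h, finrank_top] at this
    simp at this
    omega
  -- `d ⊥ ∑ q ∈ V, (p - q)`, so the terms `⟪d, p - q⟫` sum to zero; they are not all zero as `V`
  -- spans, hence they take both signs.
  have hsum : ∑ q ∈ V, ⟪d, p - q⟫ = 0 := by
    rw [← inner_sum]
    exact Submodule.mem_orthogonal_singleton_iff_inner_left.1 hdw
  obtain ⟨q, hq, hq0⟩ : ∃ q ∈ V, ⟪d, p - q⟫ ≠ 0 := by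
    by_contra! h0
    have hle : vectorSpan ℝ (V : Set E) ≤ (ℝ ∙ d)ᗮ := by
      rw [vectorSpan_def, Submodule.span_le]
      rintro _ ⟨x, hx, y, hy, rfl⟩
      have hx0 := h0 x hx
      have hy0 := h0 y hy
      rw [inner_sub_right] at hx0 hy0
      rw [SetLike.mem_coe, Submodule.mem_orthogonal_singleton_iff_inner_right]
      show ⟪d, x - y⟫ = 0
      rw [inner_sub_right]
      linarith
    exact hd0 (inner_self_eq_zero.1 (Submodule.mem_orthogonal_singleton_iff_inner_right.1
      (hle (hV ▸ Submodule.mem_top))))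
  refine ⟨d, ?_, ?_⟩
  · by_contra! h
    refine hq0 ((Finset.sum_eq_zero_iff_of_nonneg fun r hr => ?_).1 hsum q hq)
    rw [inner_sub_right, sub_nonneg]
    exact h r hr
  · by_contra! h
    refine hq0 ((Finset.sum_eq_zero_iff_of_nonpos fun r hr => ?_).1 hsum q hq)
    rw [inner_sub_right, sub_nonpos]
    exact h r hr

lemma exists_norm_le_inner_of_tie (hE : 2 ≤ finrank ℝ E) {V : Finset E}
    (hV : vectorSpan ℝ (V : Set E) = ⊤)
    (htie : ∀ m, ∀ p ∈ V, ∀ q ∈ V, q ≠ p → (∀ r ∈ V, ⟪m, r⟫ ≤ ⟪m, p⟫) → ⟪m, q⟫ = ⟪m, p⟫ →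
      ⟪m, p⟫ = ‖m‖)
    (n : E) : ∃ p ∈ V, ‖n‖ ≤ ⟪n, p⟫ := by
  have hVne : V.Nonempty := by
    rw [Finset.nonempty_iff_ne_empty]
    rintro rfl
    have := finrank_top ℝ E
    rw [Finset.coe_empty, vectorSpan_empty] at hV
    rw [← hV, finrank_bot] at this
    omega
  obtain ⟨p, hp, hmax⟩ := V.exists_max_image (⟪n, ·⟫) hVne
  -- Turning `n` towards `d` and towards `-d` until a second vertex ties gives two directions with
  -- support value equal to their norm, and `n` lies between them.
  obtain ⟨d, hd₁, hd₂⟩ := exists_inner_lt_and_lt_inner hE hV p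
  obtain ⟨t₁, ht₁, h₁⟩ := exists_inner_eq_norm_of_tie htie hp hmax hd₁
  obtain ⟨t₂, ht₂, h₂⟩ := exists_inner_eq_norm_of_tie htie hp hmax (d := -d)
    (by simpa only [inner_neg_left, neg_lt_neg_iff] using hd₂)
  refine ⟨p, hp, norm_le_inner_of_mem_segment ?_ h₂.ge h₁.ge⟩
  rw [mem_segment_iff_sameRay, show n - (n + t₂ • -d) = t₂ • d by module,
    show n + t₁ • d - n = t₁ • d by module]
  exact ((SameRay.refl d).nonneg_smul_left ht₂).nonneg_smul_right ht₁

lemma closedBall_subset_of_forall_exists_norm_le_inner [CompleteSpace E] {C : Set E}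
    (hC : Convex ℝ C) (hCc : IsClosed C) (h : ∀ n, ∃ p ∈ C, ‖n‖ ≤ ⟪n, p⟫) :
    Metric.closedBall 0 1 ⊆ C := by
  intro z hz
  by_contra hzC
  obtain ⟨f, μ, hf, hfz⟩ := geometric_hahn_banach_closed_point hC hCc hzC
  set w := (InnerProductSpace.toDual ℝ E).symm f
  obtain ⟨p, hpC, hp⟩ := h w
  have hfp := hf p hpC
  rw [← InnerProductSpace.toDual_symm_apply] at hfp hfz
  have : ⟪w, z⟫ ≤ ‖w‖ := by
    rw [mem_closedBall_zero_iff] at hz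
    calc ⟪w, z⟫ ≤ ‖w‖ * ‖z‖ := real_inner_le_norm w z
      _ ≤ ‖w‖ := mul_le_of_le_one_right (norm_nonneg w) hz
  linarith

section TwoDim

variable [Fact (finrank ℝ E = 2)]

attribute [local instance] FiniteDimensional.of_fact_finrank_eq_two

lemma exists_eq_smul_of_inner_eq_zero {a b d : E} (ha : a ≠ 0)
    (hd : d ≠ 0) (had : ⟪a, d⟫ = 0) (hbd : ⟪b, d⟫ = 0) : ∃ r : ℝ, b = r • a := by
  have hK : finrank ℝ (ℝ ∙ d)ᗮ = 1 := Submodule.finrank_orthogonal_span_singleton hd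
  have hmem (v : E) (hv : ⟪v, d⟫ = 0) : v ∈ (ℝ ∙ d)ᗮ :=
    Submodule.mem_orthogonal_singleton_iff_inner_left.2 hv
  obtain ⟨r, hr⟩ := (finrank_eq_one_iff_of_nonzero' (⟨a, hmem a had⟩ : (ℝ ∙ d)ᗮ)
    (by simpa using ha)).1 hK ⟨b, hmem b hbd⟩
  exact ⟨r, congrArg Subtype.val hr.symm⟩

lemma finrank_vectorSpan_le_one_of_inner_eq {s : Set E} {m : E} {c : ℝ} (hm : m ≠ 0)
    (h : ∀ x ∈ s, ⟪m, x⟫ = c) : finrank ℝ (vectorSpan ℝ s) ≤ 1 := by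
  have hle : vectorSpan ℝ s ≤ (ℝ ∙ m)ᗮ := by
    rw [vectorSpan_def, Submodule.span_le]
    rintro _ ⟨x, hx, y, hy, rfl⟩
    rw [SetLike.mem_coe, Submodule.mem_orthogonal_singleton_iff_inner_right]
    show ⟪m, x - y⟫ = 0
    rw [inner_sub_right, h x hx, h y hy, sub_self]
  exact (Submodule.finrank_mono hle).trans (Submodule.finrank_orthogonal_span_singleton hm).le

namespace Orientation

variable (o : Orientation ℝ E (Fin 2))

local notation "ω" => o.areaForm

lemma inner_eq_of_norm_eq_one {u : E} (hu : ‖u‖ = 1) (s x : E) :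
    ⟪s, x⟫ = ⟪u, s⟫ * ⟪u, x⟫ + ω u s * ω u x := by
  simpa [hu] using (o.inner_mul_inner_add_areaForm_mul_areaForm u s x).symm

lemma eq_of_inner_eq_of_areaForm_eq {u s s' : E} (hu : u ≠ 0) (h₁ : ⟪u, s⟫ = ⟪u, s'⟫)
    (h₂ : ω u s = ω u s') : s = s' := by
  have := o.inner_sq_add_areaForm_sq u (s - s')
  rw [inner_sub_right, map_sub, h₁, h₂, sub_self, sub_self] at this
  simpa [hu, sub_eq_zero, eq_comm] using this

/-- The tangent of half the oriented angle from `u` to `s`. -/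
noncomputable def tangentParam (u s : E) : ℝ := ω u s / (1 + ⟪u, s⟫)

lemma sq_inner_add_sq_areaForm {u s : E} (hu : ‖u‖ = 1) (hs : ‖s‖ = 1) :
    ⟪u, s⟫ ^ 2 + ω u s ^ 2 = 1 := by
  simpa [hu, hs] using o.inner_sq_add_areaForm_sq u s

lemma tangentForm_tangentParam {u s : E} (hu : ‖u‖ = 1) (hs : ‖s‖ = 1) (hc : 0 < 1 + ⟪u, s⟫)
    (x : E) :
    tangentForm (o.tangentParam u s) (⟪u, x⟫, ω u x) = 2 / (1 + ⟪u, s⟫) * (⟪s, x⟫ - 1) := by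
  rw [tangentParam, tangentForm_div_one_add (o.sq_inner_add_sq_areaForm hu hs) hc.ne',
    o.inner_eq_of_norm_eq_one hu s x]

lemma tangentSupports_tangentParam {P : Set E} {u s : E} (hu : ‖u‖ = 1) (hs : ‖s‖ = 1)
    (hc : 0 < 1 + ⟪u, s⟫) (hsP : LineSupports P s) :
    TangentSupports ((fun x => (⟪u, x⟫, ω u x)) '' P) (o.tangentParam u s) := by
  have hpos : 0 < 2 / (1 + ⟪u, s⟫) := by positivity
  simp only [TangentSupports, Set.forall_mem_image, Set.exists_mem_image,
    o.tangentForm_tangentParam hu hs hc, mul_eq_zero, hpos.ne', false_or, sub_eq_zero]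
  refine ⟨hsP.1, hsP.2.imp (fun h x hx => ?_) (fun h x hx => ?_)⟩
  · exact mul_nonpos_of_nonneg_of_nonpos hpos.le (by linarith [h x hx])
  · exact mul_nonneg hpos.le (by linarith [h x hx])

lemma eq_of_tangentParam_eq {u s s' : E} (hu : ‖u‖ = 1) (hs : ‖s‖ = 1) (hs' : ‖s'‖ = 1)
    (hc : 0 < 1 + ⟪u, s⟫) (hc' : 0 < 1 + ⟪u, s'⟫)
    (h : o.tangentParam u s = o.tangentParam u s') : s = s' := by
  obtain ⟨h₁, h₂⟩ := eq_of_div_one_add (o.sq_inner_add_sq_areaForm hu hs) hc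
  obtain ⟨h₁', h₂'⟩ := eq_of_div_one_add (o.sq_inner_add_sq_areaForm hu hs') hc'
  simp only [tangentParam] at h
  rw [h] at h₁ h₂
  exact o.eq_of_inner_eq_of_areaForm_eq (norm_ne_zero_iff.1 (by simp [hu]))
    (h₁.trans h₁'.symm) (h₂.trans h₂'.symm)

lemma tangentParam_ne_zero {u s : E} (hu : ‖u‖ = 1) (hs : ‖s‖ = 1) (hc : 0 < 1 + ⟪u, s⟫)
    (hsu : s ≠ u) : o.tangentParam u s ≠ 0 := by
  refine div_ne_zero (fun h => hsu ?_) hc.ne'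
  have hsq := o.sq_inner_add_sq_areaForm hu hs
  have hc1 : ⟪u, s⟫ = 1 := by nlinarith
  refine o.eq_of_inner_eq_of_areaForm_eq (u := u) (norm_ne_zero_iff.1 (by simp [hu])) ?_ ?_
  · rw [hc1, real_inner_self_eq_norm_sq, hu, one_pow]
  · rw [h, o.areaForm_apply_self]

end Orientation

theorem card_le_four_of_lineSupports {P : Set E} {u : E} (hu : ‖u‖ = 1) (hPu : ∀ x ∈ P, 1 ≤ ⟪u, x⟫)
    (hu₀ : ∃ x ∈ P, ⟪u, x⟫ = 1) {T : Finset E} (hT : ∀ s ∈ T, ‖s‖ = 1 ∧ LineSupports P s) :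
    T.card ≤ 4 := by
  classical
  let o := (Module.finBasisOfFinrankEq ℝ E (Fact.out : finrank ℝ E = 2)).orientation
  have hc (s) (hs : s ∈ T) := one_add_inner_pos_of_lineSupports hu (hT s hs).1 hPu (hT s hs).2
  obtain ⟨x₀, hx₀P, hx₀⟩ := hu₀
  have hS := card_le_three_of_tangentSupports (Q := (fun x => (⟪u, x⟫, o.areaForm u x)) '' P)
    (by simpa using hPu) (Set.mem_image_of_mem _ hx₀P) hx₀
    (S := (T.erase u).image (o.tangentParam u)) ?_ ?_
  · rw [Finset.card_image_of_injOn] at hS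
    · have := Finset.pred_card_le_card_erase (s := T) (a := u)
      omega
    · intro s hs s' hs' h
      simp only [Finset.coe_erase, Set.mem_sdiff, Finset.mem_coe] at hs hs'
      exact o.eq_of_tangentParam_eq hu (hT s hs.1).1 (hT s' hs'.1).1 (hc s hs.1) (hc s' hs'.1) h
  · simp only [Finset.mem_image, Finset.mem_erase, not_exists, not_and]
    rintro s ⟨hsu, hs⟩
    exact o.tangentParam_ne_zero hu (hT s hs).1 (hc s hs) hsu
  · simp only [Finset.mem_image, Finset.mem_erase, forall_exists_index, and_imp]
    rintro _ s - hs rfl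
    exact o.tangentSupports_tangentParam hu (hT s hs).1 (hc s hs) (hT s hs).2

end TwoDim

end InnerProductSpace

section Polygon

local notation "ℝ²" => EuclideanSpace ℝ (Fin 2)

instance : Fact (finrank ℝ ℝ² = 2) := ⟨finrank_euclideanSpace_fin⟩

lemma nontrivial_of_mem_edgeSet {P F : Set ℝ²} (hF : F ∈ edgeSet P) : F.Nontrivial := by
  rw [← Set.not_subsingleton_iff, ← vectorSpan_eq_bot_iff_subsingleton ℝ]
  intro h
  have := hF.2
  rw [direction_affineSpan, h, finrank_bot] at this
  exact zero_ne_one this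

lemma eq_setOf_inner_eq_one_and_lineSupports {P F : Set ℝ²} (hF : F ∈ edgeSet P) {s : ℝ²}
    (hs : s ∈ affineSpan ℝ F) (hs1 : ‖s‖ = 1) (huniq : ∀ y ∈ affineSpan ℝ F, ‖y‖ = 1 → y = s) :
    F = {x ∈ P | ⟪s, x⟫ = 1} ∧ LineSupports P s := by
  have hline (x) (hx : x ∈ F) : ⟪s, x⟫ = 1 :=
    AffineSubspace.inner_eq_one_of_forall_norm_eq_one_eq hs hs1 huniq (subset_affineSpan ℝ F hx)
  obtain ⟨x₀, hx₀, x₁, hx₁, hne⟩ := nontrivial_of_mem_edgeSet hF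
  obtain ⟨l, hl⟩ := hF.1 ⟨x₀, hx₀⟩
  have hmax (x) (hx : x ∈ F) : x ∈ P ∧ ∀ y ∈ P, l y ≤ l x := by rw [hl] at hx; exact hx
  have hw (x : ℝ²) : l x = ⟪(InnerProductSpace.toDual ℝ ℝ²).symm l, x⟫ :=
    InnerProductSpace.toDual_symm_apply.symm
  -- Both the exposing functional and `⟪s, ·⟫` vanish on the edge direction, so in the plane they
  -- are proportional.
  obtain ⟨r, hr⟩ := exists_eq_smul_of_inner_eq_zero (a := s) (by rintro rfl; simp at hs1)
    (sub_ne_zero.2 hne.symm) (by rw [inner_sub_right, hline x₁ hx₁, hline x₀ hx₀, sub_self])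
    (by rw [inner_sub_right, ← hw, ← hw, sub_eq_zero]
        exact le_antisymm ((hmax x₀ hx₀).2 x₁ (hmax x₁ hx₁).1) ((hmax x₁ hx₁).2 x₀ (hmax x₀ hx₀).1))
  have hl' (x : ℝ²) : l x = r * ⟪s, x⟫ := by rw [hw, hr, real_inner_smul_left]
  have hPr (y) (hy : y ∈ P) : r * ⟪s, y⟫ ≤ r := by
    simpa [hl', hline x₀ hx₀] using (hmax x₀ hx₀).2 y hy
  have hFeq : F = {x ∈ P | ⟪s, x⟫ = 1} := by
    ext x
    refine ⟨fun hx => ⟨(hmax x hx).1, hline x hx⟩, fun ⟨hxP, hx1⟩ => ?_⟩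
    rw [hl]
    exact ⟨hxP, fun y hy => by rw [hl', hl', hx1, mul_one]; exact hPr y hy⟩
  refine ⟨hFeq, ⟨x₀, (hmax x₀ hx₀).1, hline x₀ hx₀⟩, ?_⟩
  rcases lt_trichotomy r 0 with hr0 | rfl | hr0
  · exact Or.inr fun y hy => by nlinarith [hPr y hy]
  · refine Or.inl fun y hy => (hline y ?_).le
    rw [hl]
    exact ⟨hy, fun z _ => by simp [hl']⟩
  · exact Or.inl fun y hy => by nlinarith [hPr y hy]

lemma toExposed_innerSL_mem_edgeSet {P : Set ℝ²} {m p q : ℝ²} (hm : m ≠ 0)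
    (hp : p ∈ (innerSL ℝ m).toExposed P) (hq : q ∈ (innerSL ℝ m).toExposed P) (hpq : p ≠ q) :
    (innerSL ℝ m).toExposed P ∈ edgeSet P := by
  refine ⟨ContinuousLinearMap.toExposed.isExposed, ?_⟩
  rw [direction_affineSpan]
  refine le_antisymm (finrank_vectorSpan_le_one_of_inner_eq hm (c := ⟪m, p⟫) fun x hx =>
    le_antisymm (hp.2 x hx.1) (hx.2 p hp.1)) ?_
  · rw [Nat.one_le_iff_ne_zero, Ne, Submodule.finrank_eq_zero, vectorSpan_eq_bot_iff_subsingleton]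
    exact fun h => hpq (h hp hq)

lemma inner_eq_norm_of_tie {V : Finset ℝ²} {P : Set ℝ²} (hP : P = convexHull ℝ ↑V)
    (htan : ∀ F ∈ edgeSet P, ∃! s : ℝ², s ∈ (affineSpan ℝ F : Set ℝ²) ∧ ‖s‖ = 1)
    (hnsep : ∀ F ∈ edgeSet P, ∀ s ∈ affineSpan ℝ F, ‖s‖ = 1 → ∃ x ∈ P, ⟪s, x⟫ < 1)
    {m p q : ℝ²} (hp : p ∈ V) (hq : q ∈ V) (hqp : q ≠ p) (hmax : ∀ r ∈ V, ⟪m, r⟫ ≤ ⟪m, p⟫)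
    (htie : ⟪m, q⟫ = ⟪m, p⟫) : ⟪m, p⟫ = ‖m‖ := by
  rcases eq_or_ne m 0 with rfl | hm
  · simp
  have hPmax : ∀ x ∈ P, ⟪m, x⟫ ≤ ⟪m, p⟫ := by
    rw [hP]
    exact fun x hx =>
      convexHull_min (fun r hr => hmax r hr) (convex_halfSpace_le (innerₛₗ ℝ m).isLinear _) hx
  have hmemF (x) (hx : x ∈ V) (hxm : ⟪m, x⟫ = ⟪m, p⟫) : x ∈ (innerSL ℝ m).toExposed P :=
    ⟨hP ▸ subset_convexHull ℝ _ hx, fun y hy => by simpa [hxm] using hPmax y hy⟩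
  have hF := toExposed_innerSL_mem_edgeSet hm (hmemF p hp rfl) (hmemF q hq htie) hqp.symm
  obtain ⟨s, ⟨hs, hs1⟩, huniq⟩ := htan _ hF
  have hline := (eq_setOf_inner_eq_one_and_lineSupports hF hs hs1
    fun y hy hy1 => huniq y ⟨hy, hy1⟩).1
  have hsF (x) (hx : x ∈ V) (hxm : ⟪m, x⟫ = ⟪m, p⟫) : ⟪s, x⟫ = 1 := by
    have := hmemF x hx hxm
    rw [hline] at this
    exact this.2
  -- The tangent point is `r • m`, with `r > 0` because `P` lies on the disk's side of the edge
  -- line; then `⟪r • m, p⟫ = 1 = ‖r • m‖`.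
  obtain ⟨r, rfl⟩ := exists_eq_smul_of_inner_eq_zero hm (sub_ne_zero.2 hqp)
    (by rw [inner_sub_right, htie, sub_self])
    (by rw [inner_sub_right, hsF p hp rfl, hsF q hq htie, sub_self])
  have hsp := hsF p hp rfl
  obtain ⟨x₀, hx₀P, hx₀⟩ := hnsep _ hF _ hs hs1
  rw [real_inner_smul_left] at hsp hx₀
  have hr : 0 < r := by nlinarith [hPmax x₀ hx₀P]
  rw [norm_smul, Real.norm_of_nonneg hr.le] at hs1
  exact mul_left_cancel₀ hr.ne' (hsp.trans hs1.symm)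

theorem closedBall_subset_of_forall_exists_inner_lt {V : Finset ℝ²} {P : Set ℝ²}
    (hP : P = convexHull ℝ ↑V) (hdim : finrank ℝ (affineSpan ℝ P).direction = 2)
    (htan : ∀ F ∈ edgeSet P, ∃! s : ℝ², s ∈ (affineSpan ℝ F : Set ℝ²) ∧ ‖s‖ = 1)
    (hnsep : ∀ F ∈ edgeSet P, ∀ s ∈ affineSpan ℝ F, ‖s‖ = 1 → ∃ x ∈ P, ⟪s, x⟫ < 1) :
    Metric.closedBall 0 1 ⊆ P := by
  subst hP
  have hV : vectorSpan ℝ (V : Set ℝ²) = ⊤ := by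
    rw [affineSpan_convexHull, direction_affineSpan] at hdim
    exact Submodule.eq_top_of_finrank_eq (hdim.trans finrank_euclideanSpace_fin.symm)
  refine closedBall_subset_of_forall_exists_norm_le_inner (convex_convexHull ℝ _)
    (V.finite_toSet.isClosed_convexHull (𝕜 := ℝ)) fun n => ?_
  obtain ⟨p, hp, hn⟩ := exists_norm_le_inner_of_tie finrank_euclideanSpace_fin.ge hV
    (fun m p hp q hq hqp hmax htie => inner_eq_norm_of_tie rfl htan hnsep hp hq hqp hmax htie) n
  exact ⟨p, subset_convexHull ℝ _ hp, hn⟩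

theorem ncard_edgeSet_le_four_of_separating {P : Set ℝ²}
    (htan : ∀ F ∈ edgeSet P, ∃! s : ℝ², s ∈ (affineSpan ℝ F : Set ℝ²) ∧ ‖s‖ = 1)
    {F₀ : Set ℝ²} (hF₀ : F₀ ∈ edgeSet P) {u : ℝ²} (hu : u ∈ affineSpan ℝ F₀) (hu1 : ‖u‖ = 1)
    (hPu : ∀ x ∈ P, 1 ≤ ⟪u, x⟫) : (edgeSet P).ncard ≤ 4 := by
  have hedge (F) (hF : F ∈ edgeSet P) : ∃ s, (s ∈ affineSpan ℝ F ∧ ‖s‖ = 1) ∧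
      F = {x ∈ P | ⟪s, x⟫ = 1} ∧ LineSupports P s := by
    obtain ⟨s, ⟨hs, hs1⟩, huniq⟩ := htan F hF
    exact ⟨s, ⟨hs, hs1⟩,
      eq_setOf_inner_eq_one_and_lineSupports hF hs hs1 fun y hy hy1 => huniq y ⟨hy, hy1⟩⟩
  choose! t ht htF htS using hedge
  have hu₀ : ∃ x ∈ P, ⟪u, x⟫ = 1 := by
    rw [← (htan F₀ hF₀).unique (ht F₀ hF₀) ⟨hu, hu1⟩]
    exact (htS F₀ hF₀).1
  rcases (edgeSet P).finite_or_infinite with hfin | hinf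
  · rw [Set.ncard_eq_toFinset_card _ hfin, ← Finset.card_image_of_injOn (f := t)]
    · refine card_le_four_of_lineSupports hu1 hPu hu₀ ?_
      simp only [Finset.mem_image, Set.Finite.mem_toFinset]
      rintro _ ⟨F, hF, rfl⟩
      exact ⟨(ht F hF).2, htS F hF⟩
    · intro F hF G hG h
      simp only [Set.Finite.coe_toFinset] at hF hG
      rw [htF F hF, htF G hG, h]
  · rw [hinf.ncard]
    omega

end Polygon

theorem stmt11 (V : Finset (EuclideanSpace ℝ (Fin 2))) (P : Set (EuclideanSpace ℝ (Fin 2)))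
    -- P is a convex polygon
    (hP : P = convexHull ℝ (V : Set (EuclideanSpace ℝ (Fin 2))))
    (hdim : Module.finrank ℝ (affineSpan ℝ P).direction = 2)
    -- with at least 5 edges
    (hcard : 5 ≤ (edgeSet P).ncard)
    -- weakly circumscribed: the line spanned by each edge is tangent to the unit circle
    (htan : ∀ F ∈ edgeSet P, ∃! s : EuclideanSpace ℝ (Fin 2),
      s ∈ (affineSpan ℝ F : Set (EuclideanSpace ℝ (Fin 2))) ∧ ‖s‖ = 1) :
    -- then P is strongly circumscribed: the unit disk is contained in P and
    -- every edge touches the unit circle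
    Metric.closedBall (0 : EuclideanSpace ℝ (Fin 2)) 1 ⊆ P ∧
      ∀ F ∈ edgeSet P, ∃ s ∈ F, ‖s‖ = 1 := by
  by_cases hsep : ∃ F ∈ edgeSet P, ∃ s ∈ affineSpan ℝ F, ‖s‖ = 1 ∧ ∀ x ∈ P, 1 ≤ ⟪s, x⟫
  · obtain ⟨F₀, hF₀, u, hu, hu1, hPu⟩ := hsep
    have := ncard_edgeSet_le_four_of_separating htan hF₀ hu hu1 hPu
    omega
  push Not at hsep
  have hball := closedBall_subset_of_forall_exists_inner_lt hP hdim htan hsep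
  refine ⟨hball, fun F hF => ?_⟩
  obtain ⟨s, ⟨hs, hs1⟩, huniq⟩ := htan F hF
  refine ⟨s, ?_, hs1⟩
  rw [(eq_setOf_inner_eq_one_and_lineSupports hF hs hs1 fun y hy hy1 => huniq y ⟨hy, hy1⟩).1]
  exact ⟨hball (mem_closedBall_zero_iff.2 hs1.le), by
    rw [real_inner_self_eq_norm_sq, hs1, one_pow]⟩
end

section
/- In the Euclidean plane, at most two half-planes of the form {x : ⟨a_i, x⟩ ≤ -1} with unit vectors a_i can appear as irredundant supporting half-planes of a weakly circumscribed polygon: if three half-planes {⟨a_i,x⟩ ≤ -1}, i = 1,2,3, with unit normals a_i have nonempty common intersection, then one of them contains the intersection of the other two (one inequality is redundant). -/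
open scoped RealInnerProductSpace

/-!
Three vectors in the plane are linearly dependent, say `∑ gᵢ • aᵢ = 0` with `g ≠ 0`. Pairing
with a common point `x` of the half-planes shows that `g` can be neither `≥ 0` nor `≤ 0`, so one
coefficient `gᵢ` has the sign opposite to both others. Then `aᵢ` is a nonnegative combination
`∑ cⱼ • aⱼ` of the other two normals, and `1 = ‖aᵢ‖ ≤ ∑ cⱼ` by the triangle inequality; hence
`⟪aᵢ, x⟫ = ∑ cⱼ ⟪aⱼ, x⟫ ≤ -∑ cⱼ ≤ -1` on the intersection of the other two half-planes.
-/

open Finset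

section HalfPlanes

variable {ι E : Type*} [NormedAddCommGroup E] [InnerProductSpace ℝ E]

theorem inner_le_neg_one_of_eq_sum_smul {b x : E} {s : Finset ι} {c : ι → ℝ} {v : ι → E}
    (hb : 1 ≤ ‖b‖) (hv : ∀ j ∈ s, ‖v j‖ ≤ 1) (hc : ∀ j ∈ s, 0 ≤ c j)
    (hbv : b = ∑ j ∈ s, c j • v j) (hx : ∀ j ∈ s, ⟪v j, x⟫ ≤ -1) : ⟪b, x⟫ ≤ -1 := by
  have hc_sum : 1 ≤ ∑ j ∈ s, c j :=
    calc 1 ≤ ‖b‖ := hb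
      _ ≤ ∑ j ∈ s, ‖c j • v j‖ := hbv ▸ norm_sum_le _ _
      _ = ∑ j ∈ s, c j * ‖v j‖ := by
        refine sum_congr rfl fun j hj => ?_
        rw [norm_smul, Real.norm_of_nonneg (hc j hj)]
      _ ≤ ∑ j ∈ s, c j := sum_le_sum fun j hj => mul_le_of_le_one_right (hc j hj) (hv j hj)
  calc ⟪b, x⟫ = ∑ j ∈ s, c j * ⟪v j, x⟫ := by simp only [hbv, sum_inner, real_inner_smul_left]
    _ ≤ ∑ j ∈ s, c j * (-1) := sum_le_sum fun j hj => mul_le_mul_of_nonneg_left (hx j hj) (hc j hj)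
    _ ≤ -1 := by rw [← sum_mul]; linarith

variable [Fintype ι]

theorem exists_neg_of_sum_smul_eq_zero {a : ι → E} {g : ι → ℝ} (hg : ∑ i, g i • a i = 0)
    (hg0 : g ≠ 0) {x : E} (hx : ∀ i, ⟪a i, x⟫ ≤ -1) : ∃ i, g i < 0 := by
  by_contra! hnonneg
  have hle : ∑ i, g i ≤ 0 :=
    calc ∑ i, g i = ∑ i, g i * ⟪a i, x⟫ + ∑ i, g i := by
          simp only [← real_inner_smul_left, ← sum_inner, hg, inner_zero_left, zero_add]
      _ ≤ ∑ i, g i * (-1) + ∑ i, g i := add_le_add_left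
          (sum_le_sum fun i _ => mul_le_mul_of_nonneg_left (hx i) (hnonneg i)) _
      _ = 0 := by rw [← sum_mul]; ring
  have hzero := (sum_eq_zero_iff_of_nonneg fun i _ => hnonneg i).mp
    (le_antisymm hle (sum_nonneg fun i _ => hnonneg i))
  exact hg0 (funext fun i => hzero i (mem_univ i))

theorem eq_sum_erase_smul_of_sum_smul_eq_zero [DecidableEq ι] {a : ι → E} {g : ι → ℝ}
    (hg : ∑ j, g j • a j = 0) {i : ι} (hi : g i ≠ 0) :
    a i = ∑ j ∈ univ.erase i, (-(g j / g i)) • a j := by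
  rw [← add_sum_erase _ _ (mem_univ i), add_eq_zero_iff_eq_neg] at hg
  rw [← inv_smul_smul₀ hi (a i), hg, smul_neg, smul_sum, ← sum_neg_distrib]
  simp only [smul_smul, ← neg_smul, div_eq_inv_mul]

end HalfPlanes

theorem Fin.exists_ne_zero_forall_ne_div_nonpos {g : Fin 3 → ℝ} (hpos : ∃ p, 0 < g p)
    (hneg : ∃ n, g n < 0) : ∃ i, g i ≠ 0 ∧ ∀ j ≠ i, g j / g i ≤ 0 := by
  obtain ⟨p, hp⟩ := hpos
  obtain ⟨n, hn⟩ := hneg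
  by_cases hp_odd : ∀ j ≠ p, g j ≤ 0
  · exact ⟨p, hp.ne', fun j hj => div_nonpos_of_nonpos_of_nonneg (hp_odd j hj) hp.le⟩
  · obtain ⟨q, hqp, hq⟩ : ∃ q ≠ p, 0 < g q := by simpa using hp_odd
    refine ⟨n, hn.ne, fun j hjn => div_nonpos_of_nonneg_of_nonpos ?_ hn.le⟩
    have hpn : p ≠ n := fun h => by linarith [h ▸ hp]
    have hqn : q ≠ n := fun h => by linarith [h ▸ hq]
    rcases (by omega : j = p ∨ j = q) with rfl | rfl
    · exact hp.le
    · exact hq.le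

theorem stmt12 (a : Fin 3 → EuclideanSpace ℝ (Fin 2))
    -- three half-planes {x | ⟪aᵢ,x⟫ ≤ -1} with unit normals
    (ha : ∀ i, ‖a i‖ = 1)
    -- with nonempty common intersection
    (hne : (⋂ i, {x : EuclideanSpace ℝ (Fin 2) | ⟪a i, x⟫ ≤ -1}).Nonempty) :
    -- one of them contains the intersection of the other two
    ∃ i : Fin 3, ∀ x : EuclideanSpace ℝ (Fin 2),
      (∀ j, j ≠ i → ⟪a j, x⟫ ≤ -1) → ⟪a i, x⟫ ≤ -1 := by
  have hdep : ¬ LinearIndependent ℝ a := fun h => by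
    simpa [finrank_euclideanSpace] using h.fintype_card_le_finrank
  obtain ⟨g, hg, i₀, hgi₀⟩ := Fintype.not_linearIndependent_iff.mp hdep
  have hg0 : g ≠ 0 := fun h => hgi₀ (congrFun h i₀)
  obtain ⟨x₀, hx₀⟩ := hne
  replace hx₀ : ∀ i, ⟪a i, x₀⟫ ≤ -1 := by simpa using hx₀
  have hneg := exists_neg_of_sum_smul_eq_zero hg hg0 hx₀
  have hpos : ∃ i, 0 < g i := by
    simpa using exists_neg_of_sum_smul_eq_zero (g := -g) (by simp [neg_smul, hg])
      (neg_ne_zero.mpr hg0) hx₀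
  obtain ⟨i, hgi, hdiv⟩ := Fin.exists_ne_zero_forall_ne_div_nonpos hpos hneg
  refine ⟨i, fun x hx => inner_le_neg_one_of_eq_sum_smul (ha i).ge (fun j _ => (ha j).le) ?_
    (eq_sum_erase_smul_of_sum_smul_eq_zero hg hgi) fun j hj => hx j (ne_of_mem_erase hj)⟩
  exact fun j hj => neg_nonneg.mpr (hdiv j (ne_of_mem_erase hj))
end

section
/- Every d-polytope P is weakly (i, i+1)-scribable for each 0 ≤ i ≤ d-2: P admits a realization in Euclidean space E^d together with an ellipsoid E (equivalently, after an affine transformation, the unit sphere) such that the affine span of every (i+1)-face of P meets the closed ball bounded by E, while the affine span of every i-face is disjoint from the open ball. -/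
/-!
The affine span of a face of `conv V` is spanned by the vertices it contains, so only finitely
many affine subspaces of dimensions `i` and `i + 1` occur. A generic flat `c + W` of dimension
`d - i - 1` meets each of the `(i + 1)`-dimensional ones and misses each of the `i`-dimensional
ones. A large disc `K` of that flat around `c` still meets the former and, being compact, stays at
some distance `ε` from the latter. The ellipsoid centred at `c` with semi-axes `ρ` along `W` and
`ε` across `W` contains `K` and lies in the open `ε`-neighbourhood of `K`; an affine map taking it
to the unit ball is the required realization.
-/

open Module Metric

section

variable {E : Type*} [AddCommGroup E] [Module ℝ E] {s : Finset E} {F : Set E}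

theorem IsExtreme.subset_convexHull_inter (hF : IsExtreme ℝ (convexHull ℝ (s : Set E)) F) :
    F ⊆ convexHull ℝ ((s : Set E) ∩ F) := by
  classical
  induction s using Finset.induction_on generalizing F with
  | empty => simpa using hF.1
  | insert a t _ ih =>
    intro x hx
    have hts : convexHull ℝ (t : Set E) ⊆ convexHull ℝ (insert a t : Finset E) :=
      convexHull_mono (by simp [Set.subset_insert])
    have hsub : convexHull ℝ ((t : Set E) ∩ F) ⊆ convexHull ℝ (↑(insert a t) ∩ F) :=
      convexHull_mono (Set.inter_subset_inter_left _ (by simp [Set.subset_insert]))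
    have ha : a ∈ F → a ∈ convexHull ℝ (↑(insert a t) ∩ F) :=
      fun haF => subset_convexHull ℝ _ ⟨by simp, haF⟩
    have hG : IsExtreme ℝ (convexHull ℝ (t : Set E)) (F ∩ convexHull ℝ t) :=
      ⟨Set.inter_subset_right, fun _ h₁ _ h₂ _ hy hyseg =>
        ⟨hF.left_mem_of_mem_openSegment (hts h₁) (hts h₂) hy.1 hyseg, h₁⟩⟩
    have htF : ∀ y ∈ F, y ∈ convexHull ℝ (t : Set E) → y ∈ convexHull ℝ (↑(insert a t) ∩ F) :=
      fun y hyF hyt => hsub (convexHull_mono (Set.inter_subset_inter_right _ Set.inter_subset_left)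
        (ih hG ⟨hyF, hyt⟩))
    rcases t.eq_empty_or_nonempty with rfl | ht
    · obtain rfl : x = a := by simpa using hF.1 hx
      exact ha hx
    -- `x` lies on a segment from `a` to some `y ∈ conv t`; if `x` is strictly inside it,
    -- extremality puts both `a` and `y` into `F`.
    have hx' := hF.1 hx
    rw [Finset.coe_insert, convexHull_insert (by simpa using ht), mem_convexJoin] at hx'
    obtain ⟨b, hb, y, hy, hxy⟩ := hx'
    rw [Set.mem_singleton_iff.1 hb, ← insert_endpoints_openSegment] at hxy
    rcases hxy with rfl | rfl | hxy
    · exact ha hx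
    · exact htF x hx hy
    · have haI : a ∈ convexHull ℝ (↑(insert a t) : Set E) := subset_convexHull ℝ _ (by simp)
      exact (convex_convexHull ℝ _).openSegment_subset
        (ha (hF.left_mem_of_mem_openSegment haI (hts hy) hx hxy))
        (htF y (hF.right_mem_of_mem_openSegment haI (hts hy) hx hxy) hy) hxy

theorem IsExtreme.affineSpan_eq_affineSpan_inter
    (hF : IsExtreme ℝ (convexHull ℝ (s : Set E)) F) :
    affineSpan ℝ F = affineSpan ℝ ((s : Set E) ∩ F) :=
  le_antisymm (affineSpan_le.2 (hF.subset_convexHull_inter.trans (convexHull_subset_affineSpan _)))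
    (affineSpan_mono ℝ Set.inter_subset_right)

end

lemma Submodule.exists_forall_notMem_of_ne_top {K M : Type*} [Field K] [Infinite K]
    [AddCommGroup M] [Module K M] (s : Finset (Submodule K M)) (h : ∀ p ∈ s, p ≠ ⊤) :
    ∃ v : M, ∀ p ∈ s, v ∉ p := by
  obtain ⟨v, -, hv⟩ := Set.exists_of_ssubset <|
    Submodule.iUnion_ssubset_of_forall_ne_top_of_card_lt (Finset.univ : Finset s) Subtype.val
      (fun p => h p p.2) (by simp)
  exact ⟨v, fun p hp hvp => hv (Set.mem_biUnion (Finset.mem_univ ⟨p, hp⟩) hvp)⟩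

lemma Submodule.exists_finrank_eq_forall_disjoint {K V : Type*} [Field K] [Infinite K]
    [AddCommGroup V] [Module K V] [FiniteDimensional K V] (𝒟 : Finset (Submodule K V)) {m : ℕ}
    (hm : m ≤ finrank K V) (h : ∀ D ∈ 𝒟, finrank K D + m ≤ finrank K V) :
    ∃ W : Submodule K V, finrank K W = m ∧ ∀ D ∈ 𝒟, Disjoint D W := by
  classical
  induction m with
  | zero => exact ⟨⊥, finrank_bot K V, fun D _ => disjoint_bot_right⟩
  | succ m ih =>
    obtain ⟨W, hW, hDW⟩ := ih (by omega) fun D hD => by have := h D hD; omega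
    have hproper : ∀ U ∈ insert W (𝒟.image (· ⊔ W)), U ≠ ⊤ := by
      simp only [Finset.mem_insert, Finset.mem_image]
      rintro U (rfl | ⟨D, hD, rfl⟩) hU
      · have := finrank_top K V
        rw [← hU, hW] at this
        omega
      · have := Submodule.finrank_add_le_finrank_add_finrank D W
        rw [hU, finrank_top] at this
        have := h D hD
        omega
    obtain ⟨v, hv⟩ := Submodule.exists_forall_notMem_of_ne_top _ hproper
    refine ⟨W ⊔ K ∙ v, ?_, fun D hD => (hDW D hD).disjoint_sup_right_of_disjoint_sup_left ?_⟩
    · rw [Submodule.finrank_sup_span_singleton (hv W (Finset.mem_insert_self _ _)), hW]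
    · exact Submodule.disjoint_span_singleton_of_notMem
        (hv _ (Finset.mem_insert_of_mem (Finset.mem_image_of_mem _ hD)))

lemma AffineSubspace.exists_forall_notMem {E ι : Type*} [NormedAddCommGroup E] [NormedSpace ℝ E]
    [FiniteDimensional ℝ E] (s : Finset ι) (A : ι → AffineSubspace ℝ E)
    (h : ∀ i ∈ s, A i ≠ ⊤) : ∃ c : E, ∀ i ∈ s, c ∉ A i := by
  have hdense : Dense (⋂ i ∈ (s : Set ι), (A i : Set E)ᶜ) := by
    refine dense_biInter_of_isOpen (fun i _ => (A i).closed_of_finiteDimensional.isOpen_compl)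
      s.countable_toSet fun i hi => ?_
    rw [← interior_eq_empty_iff_dense_compl]
    by_contra hne
    refine h i hi (eq_top_iff.2 ?_)
    rw [← isOpen_interior.affineSpan_eq_top (Set.nonempty_iff_ne_empty.2 hne), affineSpan_le]
    exact interior_subset
  obtain ⟨c, hc⟩ := hdense.nonempty
  exact ⟨c, fun i hi => by simpa using Set.mem_iInter₂.1 hc i hi⟩

theorem exists_flat_meets_and_avoids {E : Type*} [NormedAddCommGroup E] [NormedSpace ℝ E]
    [FiniteDimensional ℝ E] {k : ℕ} (hk : k < finrank ℝ E) (𝒞 𝒜 : Finset (AffineSubspace ℝ E))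
    (h𝒞 : ∀ C ∈ 𝒞, finrank ℝ C.direction = k + 1) (h𝒜 : ∀ A ∈ 𝒜, finrank ℝ A.direction ≤ k) :
    ∃ (c : E) (W : Submodule ℝ E),
      (∀ C ∈ 𝒞, ∃ x ∈ C, x - c ∈ W) ∧ ∀ A ∈ 𝒜, ∀ x ∈ A, x - c ∉ W := by
  classical
  obtain ⟨W, hW, hCW⟩ := Submodule.exists_finrank_eq_forall_disjoint (𝒞.image (·.direction))
    (m := finrank ℝ E - (k + 1)) (by omega) (by
      simp only [Finset.mem_image]
      rintro _ ⟨C, hC, rfl⟩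
      rw [h𝒞 C hC]
      omega)
  -- `B` is the flat `A + W`: `c + W` misses `A` as soon as `c ∉ B`.
  have hAW : ∀ A ∈ 𝒜, ∃ B : AffineSubspace ℝ E, B ≠ ⊤ ∧ ∀ c, ∀ x ∈ A, x - c ∈ W → c ∈ B := by
    intro A hA
    rcases (A : Set E).eq_empty_or_nonempty with hAe | ⟨a, ha⟩
    · exact ⟨⊥, bot_ne_top, fun c x hx => (hAe.subset hx).elim⟩
    refine ⟨.mk' a (A.direction ⊔ W), fun htop => ?_, fun c x hx hxc => ?_⟩
    · have := Submodule.finrank_add_le_finrank_add_finrank A.direction W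
      rw [← AffineSubspace.direction_mk' a (A.direction ⊔ W), htop, AffineSubspace.direction_top,
        finrank_top] at this
      have := h𝒜 A hA
      omega
    · rw [AffineSubspace.mem_mk', vsub_eq_sub, ← sub_sub_sub_cancel_left a c x]
      exact Submodule.sub_mem _ (Submodule.mem_sup_left (A.vsub_mem_direction hx ha))
        (Submodule.mem_sup_right hxc)
  choose! B hB using hAW
  obtain ⟨c, hc⟩ := AffineSubspace.exists_forall_notMem 𝒜 B fun A hA => (hB A hA).1
  refine ⟨c, W, fun C hC => ?_, fun A hA x hx hxc => hc A hA ((hB A hA).2 c x hx hxc)⟩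
  obtain ⟨a, ha⟩ : (C : Set E).Nonempty := by
    by_contra! hC0
    have := h𝒞 C hC
    rw [AffineSubspace.coe_eq_bot_iff] at hC0
    rw [hC0, AffineSubspace.direction_bot, finrank_bot] at this
    omega
  have hsup : C.direction ⊔ W = ⊤ := Submodule.eq_top_of_disjoint _ _
    (by rw [h𝒞 C hC, hW]; omega) (hCW _ (Finset.mem_image_of_mem _ hC))
  obtain ⟨v, hv, w, hw, hvw⟩ := Submodule.mem_sup.1 (hsup ▸ Submodule.mem_top (x := c - a))
  refine ⟨v +ᵥ a, AffineSubspace.vadd_mem_of_mem_direction hv ha, ?_⟩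
  have : v + a - c = -w := by rw [show c = v + w + a by rw [hvw]; abel]; abel
  rw [vadd_eq_add, this]
  exact W.neg_mem hw

section

variable {E : Type*} [NormedAddCommGroup E] [InnerProductSpace ℝ E]

namespace Submodule

variable (W : Submodule ℝ E) [W.HasOrthogonalProjection]

noncomputable def orthogonalScaling (α β : ℝ) : E →L[ℝ] E :=
  α • W.starProjection + β • Wᗮ.starProjection

lemma orthogonalScaling_apply (α β : ℝ) (z : E) :
    W.orthogonalScaling α β z = α • W.starProjection z + β • Wᗮ.starProjection z := rfl

lemma orthogonalScaling_of_mem (α β : ℝ) {w : E} (hw : w ∈ W) :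
    W.orthogonalScaling α β w = α • w := by
  rw [orthogonalScaling_apply, W.starProjection_eq_self_iff.2 hw,
    starProjection_orthogonal_apply_eq_zero hw, smul_zero, add_zero]

lemma orthogonalScaling_orthogonalScaling (α β α' β' : ℝ) (z : E) :
    W.orthogonalScaling α β (W.orthogonalScaling α' β' z) =
      W.orthogonalScaling (α * α') (β * β') z := by
  have hPP : W.starProjection (W.starProjection z) = W.starProjection z :=
    W.starProjection_eq_self_iff.2 (W.starProjection_apply_mem z)
  simp only [orthogonalScaling_apply, starProjection_orthogonal', map_add, map_smul, map_sub,
    _root_.sub_apply, _root_.one_apply_eq_self, hPP]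
  module

lemma orthogonalScaling_one_one (z : E) : W.orthogonalScaling 1 1 z = z := by
  simp [orthogonalScaling_apply]

lemma exists_affineEquiv_symm_eq_add_orthogonalScaling (c : E) {α β : ℝ} (hα : α ≠ 0)
    (hβ : β ≠ 0) : ∃ T : E ≃ᵃ[ℝ] E, ∀ z, T.symm z = c + W.orthogonalScaling α β z := by
  let M : E ≃L[ℝ] E := .equivOfInverse (W.orthogonalScaling α β) (W.orthogonalScaling α⁻¹ β⁻¹)
    (fun z => by
      rw [orthogonalScaling_orthogonalScaling, inv_mul_cancel₀ hα, inv_mul_cancel₀ hβ,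
        orthogonalScaling_one_one])
    (fun z => by
      rw [orthogonalScaling_orthogonalScaling, mul_inv_cancel₀ hα, mul_inv_cancel₀ hβ,
        orthogonalScaling_one_one])
  exact ⟨(M.toLinearEquiv.toAffineEquiv.trans (AffineEquiv.constVAdd ℝ E c)).symm, fun z => rfl⟩

end Submodule

variable [FiniteDimensional ℝ E]

theorem exists_affineEquiv_meets_closedBall_avoids_ball (c : E) (W : Submodule ℝ E)
    (𝒞 𝒜 : Finset (AffineSubspace ℝ E)) (h𝒞 : ∀ C ∈ 𝒞, ∃ x ∈ C, x - c ∈ W)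
    (h𝒜 : ∀ A ∈ 𝒜, ∀ x ∈ A, x - c ∉ W) :
    ∃ T : E ≃ᵃ[ℝ] E, (∀ C ∈ 𝒞, ((C.map T.toAffineMap : Set E) ∩ closedBall 0 1).Nonempty) ∧
      ∀ A ∈ 𝒜, Disjoint (A.map T.toAffineMap : Set E) (ball 0 1) := by
  obtain ⟨ρ, hρ, h𝒞ρ⟩ : ∃ ρ > 0, ∀ C ∈ 𝒞, ∃ x ∈ C, x - c ∈ W ∧ ‖x - c‖ ≤ ρ := by
    choose! p hp using h𝒞
    obtain ⟨ρ, hρ⟩ := (𝒞.image fun C => ‖p C - c‖).bddAbove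
    exact ⟨max ρ 1, by positivity, fun C hC => ⟨p C, (hp C hC).1, (hp C hC).2,
      (hρ (Finset.mem_image_of_mem _ hC)).trans (le_max_left _ _)⟩⟩
  set K := closedBall c ρ ∩ {x | x - c ∈ W}
  have hK : IsCompact K := (isCompact_closedBall c ρ).inter_right
    (W.closed_of_finiteDimensional.preimage (continuous_sub_right c))
  obtain ⟨ε, hε, hεK⟩ := hK.exists_thickening_subset_open
    (isOpen_biInter_finset (f := fun A : AffineSubspace ℝ E => (A : Set E)ᶜ) fun A _ =>
      A.closed_of_finiteDimensional.isOpen_compl)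
    (fun x hx => Set.mem_iInter₂.2 fun A hA hxA => h𝒜 A hA x hxA hx.2)
  obtain ⟨T, hT⟩ := W.exists_affineEquiv_symm_eq_add_orthogonalScaling c hρ.ne' hε.ne'
  refine ⟨T, fun C hC => ?_, fun A hA => ?_⟩
  · obtain ⟨x, hxC, hxW, hxρ⟩ := h𝒞ρ C hC
    have hTx : T x = ρ⁻¹ • (x - c) := by
      rw [← T.apply_symm_apply (ρ⁻¹ • (x - c)), hT,
        W.orthogonalScaling_of_mem _ _ (W.smul_mem _ hxW), smul_inv_smul₀ hρ.ne', add_sub_cancel]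
    refine ⟨T x, AffineSubspace.mem_map.2 ⟨x, hxC, rfl⟩, ?_⟩
    rw [mem_closedBall_zero_iff, hTx, norm_smul, norm_inv, Real.norm_of_nonneg hρ.le]
    exact inv_mul_le_one_of_le₀ hxρ hρ.le
  · rw [Set.disjoint_left]
    rintro _ hz hzball
    obtain ⟨x, hxA, rfl⟩ := AffineSubspace.mem_map.1 hz
    rw [mem_ball_zero_iff] at hzball
    refine Set.mem_iInter₂.1 (hεK ?_) A hA hxA
    set z := T x
    have hx : x = c + (ρ • W.starProjection z + ε • Wᗮ.starProjection z) := by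
      rw [← W.orthogonalScaling_apply, ← hT, T.symm_apply_apply]
    refine mem_thickening_iff.2 ⟨c + ρ • W.starProjection z, ⟨?_, ?_⟩, ?_⟩
    · rw [mem_closedBall, dist_self_add_left, norm_smul, Real.norm_of_nonneg hρ.le]
      exact mul_le_of_le_one_right hρ.le ((W.norm_starProjection_apply_le z).trans hzball.le)
    · simpa using W.smul_mem ρ (W.starProjection_apply_mem z)
    · rw [hx, dist_eq_norm, add_sub_add_left_eq_sub, add_sub_cancel_left, norm_smul,
        Real.norm_of_nonneg hε.le]
      exact mul_lt_of_lt_one_right hε ((Wᗮ.norm_starProjection_apply_le z).trans_lt hzball)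

end

theorem exists_affineEquiv_faces_meet_closedBall_avoid_ball {E : Type*} [NormedAddCommGroup E]
    [InnerProductSpace ℝ E] [FiniteDimensional ℝ E] (V : Finset E) {i : ℕ}
    (hi : i < finrank ℝ E) :
    ∃ T : E ≃ᵃ[ℝ] E,
      (∀ F : Set E, IsExtreme ℝ (convexHull ℝ (V : Set E)) F →
        finrank ℝ (affineSpan ℝ F).direction = i + 1 →
        ((affineSpan ℝ (T '' F) : Set E) ∩ closedBall 0 1).Nonempty) ∧
      (∀ F : Set E, IsExtreme ℝ (convexHull ℝ (V : Set E)) F →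
        finrank ℝ (affineSpan ℝ F).direction = i →
        (affineSpan ℝ (T '' F) : Set E) ∩ ball 0 1 = ∅) := by
  classical
  set 𝒮 := V.powerset.image fun S : Finset E => affineSpan ℝ (S : Set E)
  have h𝒮 : ∀ F, IsExtreme ℝ (convexHull ℝ (V : Set E)) F → affineSpan ℝ F ∈ 𝒮 := fun F hF =>
    Finset.mem_image.2 ⟨V.filter (· ∈ F), Finset.mem_powerset.2 (Finset.filter_subset _ _), by
      rw [hF.affineSpan_eq_affineSpan_inter, Finset.coe_filter]; rfl⟩
  obtain ⟨c, W, hcut, havoid⟩ := exists_flat_meets_and_avoids hi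
    (𝒮.filter fun A => finrank ℝ A.direction = i + 1) (𝒮.filter fun A => finrank ℝ A.direction = i)
    (fun C hC => (Finset.mem_filter.1 hC).2) (fun A hA => (Finset.mem_filter.1 hA).2.le)
  obtain ⟨T, hT𝒞, hT𝒜⟩ := exists_affineEquiv_meets_closedBall_avoids_ball c W _ _ hcut havoid
  have hmap (F : Set E) : affineSpan ℝ (T '' F) = (affineSpan ℝ F).map T.toAffineMap :=
    (AffineSubspace.map_span T.toAffineMap F).symm
  refine ⟨T, fun F hF hrank => ?_, fun F hF hrank => ?_⟩
  · rw [hmap]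
    exact hT𝒞 _ (Finset.mem_filter.2 ⟨h𝒮 F hF, hrank⟩)
  · rw [hmap, ← Set.disjoint_iff_inter_eq_empty]
    exact hT𝒜 _ (Finset.mem_filter.2 ⟨h𝒮 F hF, hrank⟩)

theorem stmt14_general (d i : ℕ) (hd : 2 ≤ d) (hi : i ≤ d - 2)
    (V : Finset (EuclideanSpace ℝ (Fin d))) :
    -- P is weakly (i, i+1)-scribable: some affine image of P (a realization of P)
    -- is weakly i-avoiding and weakly (i+1)-cutting with respect to the unit sphere
    ∃ T : EuclideanSpace ℝ (Fin d) ≃ᵃ[ℝ] EuclideanSpace ℝ (Fin d),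
      (∀ F : Set (EuclideanSpace ℝ (Fin d)),
        IsExtreme ℝ (convexHull ℝ (V : Set (EuclideanSpace ℝ (Fin d)))) F →
        Module.finrank ℝ (affineSpan ℝ F).direction = i + 1 →
        ((affineSpan ℝ (⇑T '' F) : Set (EuclideanSpace ℝ (Fin d))) ∩
          Metric.closedBall 0 1).Nonempty) ∧
      (∀ F : Set (EuclideanSpace ℝ (Fin d)),
        IsExtreme ℝ (convexHull ℝ (V : Set (EuclideanSpace ℝ (Fin d)))) F →
        Module.finrank ℝ (affineSpan ℝ F).direction = i →
        (affineSpan ℝ (⇑T '' F) : Set (EuclideanSpace ℝ (Fin d))) ∩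
          Metric.ball 0 1 = ∅) :=
  exists_affineEquiv_faces_meet_closedBall_avoid_ball V (by rw [finrank_euclideanSpace_fin]; omega)

theorem stmt14 (d i : ℕ) (hd : 2 ≤ d) (hi : i ≤ d - 2)
    (V : Finset (EuclideanSpace ℝ (Fin d)))
    -- P = conv(V) is a d-polytope
    (hdim : Module.finrank ℝ
      (affineSpan ℝ (V : Set (EuclideanSpace ℝ (Fin d)))).direction = d) :
    -- P is weakly (i, i+1)-scribable: some affine image of P (a realization of P)
    -- is weakly i-avoiding and weakly (i+1)-cutting with respect to the unit sphere
    ∃ T : EuclideanSpace ℝ (Fin d) ≃ᵃ[ℝ] EuclideanSpace ℝ (Fin d),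
      (∀ F : Set (EuclideanSpace ℝ (Fin d)),
        IsExtreme ℝ (convexHull ℝ (V : Set (EuclideanSpace ℝ (Fin d)))) F →
        Module.finrank ℝ (affineSpan ℝ F).direction = i + 1 →
        ((affineSpan ℝ (⇑T '' F) : Set (EuclideanSpace ℝ (Fin d))) ∩
          Metric.closedBall 0 1).Nonempty) ∧
      (∀ F : Set (EuclideanSpace ℝ (Fin d)),
        IsExtreme ℝ (convexHull ℝ (V : Set (EuclideanSpace ℝ (Fin d)))) F →
        Module.finrank ℝ (affineSpan ℝ F).direction = i →
        (affineSpan ℝ (⇑T '' F) : Set (EuclideanSpace ℝ (Fin d))) ∩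
          Metric.ball 0 1 = ∅) :=
  stmt14_general d i hd hi V
end

section
/- Let Δ be a d-simplex in E^d such that every (d-2)-face (ridge) of Δ is tangent to the unit sphere S, and all vertices lie outside the closed unit ball. Then for every hyperplane H tangent to S and containing a ridge of Δ, the simplex Δ is contained in the closed half-space bounded by H that contains the unit ball. -/
open scoped RealInnerProductSpace

theorem stmt17 (d : ℕ) (hd : 2 ≤ d)
    -- Δ is a d-simplex with vertices v 0, ..., v d
    (v : Fin (d + 1) → EuclideanSpace ℝ (Fin d))
    (hind : AffineIndependent ℝ v)
    -- all vertices lie outside the closed unit ball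
    (hout : ∀ i, 1 < ‖v i‖)
    -- every ridge (convex hull of all vertices but two) is tangent to the unit sphere:
    -- its relative interior meets the sphere in exactly one point
    (htan : ∀ i j : Fin (d + 1), i ≠ j →
      ∃! s : EuclideanSpace ℝ (Fin d),
        s ∈ intrinsicInterior ℝ (convexHull ℝ (v '' {k | k ≠ i ∧ k ≠ j})) ∧ ‖s‖ = 1)
    -- H = {x | ⟪t,x⟫ = 1} is a hyperplane tangent to the sphere at t containing a ridge
    (t : EuclideanSpace ℝ (Fin d)) (ht : ‖t‖ = 1)
    (i j : Fin (d + 1)) (hij : i ≠ j)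
    (hcontain : convexHull ℝ (v '' {k | k ≠ i ∧ k ≠ j}) ⊆ {x | ⟪t, x⟫ = 1}) :
    -- then Δ lies in the half-space bounded by H containing the unit ball
    convexHull ℝ (Set.range v) ⊆ {x | ⟪t, x⟫ ≤ 1} := by
  have hlin : IsLinearMap ℝ (fun x : EuclideanSpace ℝ (Fin d) => ⟪t, x⟫) :=
    ⟨fun x y => inner_add_right t x y, fun r x => real_inner_smul_right t x r⟩
  have htt : ⟪t, t⟫ = 1 := by
    rw [real_inner_self_eq_norm_mul_norm, ht]; norm_num
  -- vertices other than i, j lie on the hyperplane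
  have hone : ∀ m : Fin (d + 1), m ≠ i → m ≠ j → ⟪t, v m⟫ = 1 := fun m h1 h2 =>
    hcontain (subset_convexHull ℝ _ ⟨m, ⟨h1, h2⟩, rfl⟩)
  -- there is a third index
  have hk : ∃ k : Fin (d + 1), k ≠ i ∧ k ≠ j := by
    by_contra h
    push_neg at h
    have hsub : (Finset.univ : Finset (Fin (d + 1))) ⊆ {i, j} := by
      intro m _
      rcases eq_or_ne m i with rfl | hmi
      · simp
      · simp [h m hmi]
    have h1 := Finset.card_le_card hsub
    have h2 : ({i, j} : Finset (Fin (d + 1))).card ≤ 2 :=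
      (Finset.card_insert_le _ _).trans (by simp)
    simp [Finset.card_univ] at h1
    omega
  obtain ⟨k, hki, hkj⟩ := hk
  -- the core lemma: if all vertices except a, b, c lie on the hyperplane, then
  -- vertex c is on the ball side of the hyperplane
  have core : ∀ a b c : Fin (d + 1), a ≠ b → c ≠ a → c ≠ b →
      (∀ m : Fin (d + 1), m ≠ a → m ≠ b → m ≠ c → ⟪t, v m⟫ = 1) → ⟪t, v c⟫ ≤ 1 := by
    intro a b c hab hca hcb hone'
    by_contra hc
    push_neg at hc
    set F := convexHull ℝ (v '' {m | m ≠ a ∧ m ≠ b}) with hFdef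
    -- every point of the ridge F satisfies 1 ≤ ⟪t, x⟫
    have hge : F ⊆ {x | 1 ≤ ⟪t, x⟫} := by
      apply convexHull_min
      · rintro x ⟨m, ⟨h1, h2⟩, rfl⟩
        rcases eq_or_ne m c with rfl | hmc
        · exact le_of_lt hc
        · exact le_of_eq (hone' m h1 h2 hmc).symm
      · exact convex_halfSpace_ge hlin 1
    obtain ⟨s, ⟨hsInt, hsNorm⟩, -⟩ := htan a b hab
    have hsF : s ∈ F := intrinsicInterior_subset hsInt
    have hle : ⟪t, s⟫ ≤ 1 := by
      calc ⟪t, s⟫ ≤ ‖t‖ * ‖s‖ := real_inner_le_norm t s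
        _ = 1 := by rw [ht, hsNorm]; norm_num
    have hst : t = s := (inner_eq_one_iff_of_norm_eq_one ht hsNorm).mp (le_antisymm hle (hge hsF))
    rw [← hst] at hsInt
    -- t is in the intrinsic interior of F; move slightly away from v c within F
    obtain ⟨y, hy, hyt⟩ := hsInt
    have hvcF : v c ∈ F := subset_convexHull ℝ _ ⟨c, ⟨hca, hcb⟩, rfl⟩
    have hvcspan : v c ∈ affineSpan ℝ F := subset_affineSpan ℝ F hvcF
    have htspan : t ∈ affineSpan ℝ F := hyt ▸ y.2
    set γ : ℝ → affineSpan ℝ F := fun ε =>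
      ⟨ε • (v c - t) + t, (affineSpan ℝ F).smul_vsub_vadd_mem ε hvcspan htspan htspan⟩ with hγ
    have hγc : Continuous γ := by
      exact Continuous.subtype_mk ((continuous_id.smul continuous_const).add continuous_const) _
    have hγ0 : γ 0 = y := by
      apply Subtype.ext
      simp [hγ, hyt]
    have hmem : γ ⁻¹' interior ((↑) ⁻¹' F) ∈ nhds (0 : ℝ) := by
      apply hγc.continuousAt.preimage_mem_nhds
      exact isOpen_interior.mem_nhds (hγ0 ▸ hy)
    obtain ⟨δ, hδ, hball⟩ := Metric.mem_nhds_iff.mp hmem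
    have hεmem : (-(δ / 2)) ∈ Metric.ball (0 : ℝ) δ := by
      simp [abs_of_nonneg, Real.dist_eq]
      rw [abs_of_nonneg (by positivity)]
      linarith
    have hi1 : γ (-(δ / 2)) ∈ interior ((Subtype.val) ⁻¹' F) := hball hεmem
    have hi2 : γ (-(δ / 2)) ∈ (Subtype.val) ⁻¹' F := interior_subset hi1
    have hFε : ((-(δ / 2)) • (v c - t) + t) ∈ F := hi2
    have h1 : (1 : ℝ) ≤ ⟪t, (-(δ / 2)) • (v c - t) + t⟫ := hge hFε
    have h2 : ⟪t, (-(δ / 2)) • (v c - t) + t⟫ = (-(δ / 2)) * (⟪t, v c⟫ - 1) + 1 := by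
      rw [inner_add_right, real_inner_smul_right, inner_sub_right, htt]
    rw [h2] at h1
    nlinarith
  -- conclude
  apply convexHull_min
  · rintro x ⟨m, rfl⟩
    rcases eq_or_ne m i with rfl | hmi
    · exact core j k m hkj.symm hij (Ne.symm hki) fun n h1 h2 h3 => hone n h3 h1
    rcases eq_or_ne m j with rfl | hmj
    · exact core i k m hki.symm (Ne.symm hij) (Ne.symm hkj) fun n h1 h2 h3 => hone n h1 h3
    · exact le_of_eq (hone m hmi hmj)
  · exact convex_halfSpace_le hlin 1
end
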